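/- arXiv:1410.5888 — 6 statements merged into one kernel-verified Lean document; each statement's English description precedes it below -/
import Mathlib

section
/- Let p be an odd prime, f an odd positive integer, n a positive integer, and a an integer with a ≡ 1 (mod 4). Let ℓ be an odd prime dividing nf. If ℓ ∤ 4p + af², then C_p^{(ℓ)}(a,f,n) = 1 + ((4p+af²)/ℓ) when ℓ ∤ (p−1)² − af², and C_p^{(ℓ)}(a,f,n) = 1 when ℓ | (p−1)² − af², where (·/ℓ) denotes the Legendre symbol. -/
/-
Write `D(p, m) - a f² = (m - (p + 1))² - A` with `A = 4p + a f²`. Since `ℓ ∤ A` and `ℓ` is odd,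
every square root of `A` modulo `ℓ` lifts uniquely to one modulo `ℓ ^ e` (Hensel), and being a
unit modulo `ℓ ^ e` is decided modulo `ℓ`. So `C` counts the nonzero roots of `(y - (p + 1))² = A`
in `𝔽_ℓ`. If `0` is not a root, these are the `1 + (A/ℓ)` translates of the square roots of
`A`; if it is (i.e. `ℓ ∣ (p + 1)² - A = (p - 1)² - a f²`), the only other root is `2(p + 1)`.
-/

open scoped Classical

noncomputable section

/-- `D(m,n) := (m+1-n)^2 - 4m`. -/
def Dfun (m n : ℤ) : ℤ := (m + 1 - n) ^ 2 - 4 * m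

/-- `C_p^{(ℓ)}(a,f,n)`: the number of units `m` modulo `ℓ^e`, where `e = ν_ℓ(4nf²)`,
satisfying `D(p,m) ≡ a f² (mod ℓ^e)`. -/
def Cpl (p : ℕ) (a : ℤ) (f n ℓ : ℕ) : ℕ :=
  ((Finset.range (ℓ ^ ((4 * n * f ^ 2).factorization ℓ))).filter
    (fun m => Nat.Coprime m (ℓ ^ ((4 * n * f ^ 2).factorization ℓ)) ∧
      ((ℓ : ℤ) ^ ((4 * n * f ^ 2).factorization ℓ)) ∣
        (Dfun (p : ℤ) (m : ℤ) - a * (f : ℤ) ^ 2))).card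

theorem Int.exists_sq_sub_dvd_pow_succ {p : ℤ} (hp : Prime p) (hp2 : ¬ p ∣ 2) {A y : ℤ}
    (hA : ¬ p ∣ A) (hy : p ∣ y ^ 2 - A) (k : ℕ) :
    ∃ x, p ^ (k + 1) ∣ x ^ 2 - A ∧ p ∣ x - y := by
  induction k with
  | zero => exact ⟨y, by simpa using hy, by simp⟩
  | succ k ih =>
    obtain ⟨x, ⟨t, ht⟩, hxy⟩ := ih
    have hx : ¬ p ∣ x := fun hpx => hA <| by
      have := (dvd_pow hpx two_ne_zero).sub ((dvd_pow_self p k.succ_ne_zero).mul_right t)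
      rwa [← ht, sub_sub_cancel] at this
    obtain ⟨u, v, huv⟩ := (hp.coprime_iff_not_dvd.mpr fun h => (hp.dvd_mul.mp h).elim hp2 hx)
    -- Newton step: `2 x v ≡ 1 (mod p)` inverts the derivative of `X ^ 2 - A` at `x`.
    refine ⟨x - p ^ (k + 1) * t * v, ⟨t * u + p ^ k * t ^ 2 * v ^ 2, ?_⟩, ?_⟩
    · linear_combination ht - p ^ (k + 1) * t * huv
    · rw [sub_right_comm]
      exact hxy.sub (Dvd.intro (p ^ k * t * v) (by ring))

open Finset

theorem ZMod.card_filter_range_natCast (N : ℕ) [NeZero N] (P : ZMod N → Prop) [DecidablePred P] :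
    #{m ∈ range N | P ((m : ℕ) : ZMod N)} = #{x : ZMod N | P x} :=
  card_nbij' Nat.cast ZMod.val (fun m hm => by simpa using (mem_filter.mp hm).2)
    (fun x hx => by simpa [ZMod.val_lt] using hx)
    (fun m hm => ZMod.val_cast_of_lt (mem_range.mp (mem_filter.mp hm).1))
    (fun x _ => ZMod.natCast_zmod_val x)

section Reduction

variable {ℓ : ℕ} [Fact ℓ.Prime] {e : ℕ}

theorem ZMod.isUnit_iff_castHom_ne_zero (he : e ≠ 0) (x : ZMod (ℓ ^ e)) :
    IsUnit x ↔ ZMod.castHom (dvd_pow_self ℓ he) (ZMod ℓ) x ≠ 0 := by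
  rw [← ZMod.natCast_zmod_val x,
    ZMod.isUnit_natCast_iff_not_dvd_pow Fact.out (Nat.pos_of_ne_zero he), map_natCast, Ne,
    ZMod.natCast_eq_zero_iff]

theorem ZMod.two_ne_zero_of_ne_two (hℓ2 : ℓ ≠ 2) : (2 : ZMod ℓ) ≠ 0 :=
  Ring.two_ne_zero (by rwa [ZMod.ringChar_zmod_n])

theorem ZMod.eq_of_sq_eq_of_castHom_eq (hℓ2 : ℓ ≠ 2) (he : e ≠ 0) {x z : ZMod (ℓ ^ e)}
    (hsq : x ^ 2 = z ^ 2) (hxz : ZMod.castHom (dvd_pow_self ℓ he) (ZMod ℓ) x =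
      ZMod.castHom (dvd_pow_self ℓ he) (ZMod ℓ) z)
    (hx : ZMod.castHom (dvd_pow_self ℓ he) (ZMod ℓ) x ≠ 0) : x = z := by
  have hunit : IsUnit (x + z) := by
    rw [ZMod.isUnit_iff_castHom_ne_zero he, map_add, ← hxz, ← two_mul]
    exact mul_ne_zero (ZMod.two_ne_zero_of_ne_two hℓ2) hx
  rw [← sub_eq_zero, ← hunit.mul_left_eq_zero]
  linear_combination hsq

theorem ZMod.exists_sq_eq_castHom_eq (hℓ2 : ℓ ≠ 2) (he : e ≠ 0) {A : ℤ} (hA : (A : ZMod ℓ) ≠ 0)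
    {y : ZMod ℓ} (hy : y ^ 2 = A) :
    ∃ x : ZMod (ℓ ^ e), x ^ 2 = A ∧ ZMod.castHom (dvd_pow_self ℓ he) (ZMod ℓ) x = y := by
  have hℓ : Prime (ℓ : ℤ) := Nat.prime_iff_prime_int.mp Fact.out
  simp only [Ne, ZMod.intCast_zmod_eq_zero_iff_dvd] at hA
  have h2 : ¬ (ℓ : ℤ) ∣ 2 := by
    simpa [← ZMod.intCast_zmod_eq_zero_iff_dvd] using ZMod.two_ne_zero_of_ne_two hℓ2
  have hy' : (ℓ : ℤ) ∣ (y.val : ℤ) ^ 2 - A := by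
    rw [← ZMod.intCast_zmod_eq_zero_iff_dvd]
    push_cast
    rw [ZMod.natCast_zmod_val, hy, sub_self]
  obtain ⟨X, hXA, hXy⟩ := Int.exists_sq_sub_dvd_pow_succ hℓ h2 hA hy' (e - 1)
  rw [Nat.sub_add_cancel (Nat.pos_of_ne_zero he)] at hXA
  refine ⟨X, ?_, ?_⟩
  · exact_mod_cast (ZMod.intCast_eq_intCast_iff_dvd_sub _ _ _).mpr
      (dvd_sub_comm.mp (by exact_mod_cast hXA))
  · rw [map_intCast, ← ZMod.natCast_zmod_val y]
    exact_mod_cast (ZMod.intCast_eq_intCast_iff_dvd_sub _ _ _).mpr (dvd_sub_comm.mp hXy)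

theorem ZMod.card_filter_sub_sq_eq_castHom (hℓ2 : ℓ ≠ 2) (he : e ≠ 0) {c A : ℤ}
    (hA : (A : ZMod ℓ) ≠ 0) (q : ZMod ℓ → Prop) [DecidablePred q] :
    #{x : ZMod (ℓ ^ e) | (x - c) ^ 2 = A ∧ q (ZMod.castHom (dvd_pow_self ℓ he) (ZMod ℓ) x)} =
      #{y : ZMod ℓ | (y - c) ^ 2 = A ∧ q y} := by
  set π := ZMod.castHom (dvd_pow_self ℓ he) (ZMod ℓ)
  have hπ : ∀ x : ZMod (ℓ ^ e), π ((x - c) ^ 2) = (π x - c) ^ 2 := by simp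
  refine card_bij (fun x _ => π x) ?_ ?_ ?_
  · intro x hx
    simp only [mem_filter, mem_univ, true_and] at hx ⊢
    exact ⟨by rw [← hπ, hx.1, map_intCast], hx.2⟩
  · intro x hx z hz hxz
    simp only [mem_filter, mem_univ, true_and] at hx hz
    have hπx : (π x - c) ^ 2 = A := by rw [← hπ, hx.1, map_intCast]
    have hne : π (x - c) ≠ 0 := by
      rw [map_sub, map_intCast]
      rintro h
      exact hA (by rw [← hπx, h, zero_pow two_ne_zero])
    refine sub_left_inj.mp (ZMod.eq_of_sq_eq_of_castHom_eq hℓ2 he (hx.1.trans hz.1.symm) ?_ hne)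
    simpa only [map_sub] using congrArg (· - π c) hxz
  · intro y hy
    simp only [mem_filter, mem_univ, true_and] at hy
    obtain ⟨x, hxA, hxy⟩ := ZMod.exists_sq_eq_castHom_eq hℓ2 he hA hy.1
    have hπx : π (x + c) = y := by simp only [π, map_add, map_intCast, hxy, sub_add_cancel]
    refine ⟨x + c, ?_, hπx⟩
    simp only [mem_filter, mem_univ, add_sub_cancel_right, hxA, hπx, hy.2, and_self]

end Reduction

theorem card_filter_sub_sq_eq_and_ne_zero_of_sq_ne {R : Type*} [Ring R] [Fintype R]
    [DecidableEq R] {c A : R} (h : c ^ 2 ≠ A) :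
    #{y : R | (y - c) ^ 2 = A ∧ y ≠ 0} = #{y : R | y ^ 2 = A} := by
  refine card_nbij' (· - c) (· + c) ?_ ?_ (fun y _ => by simp) (fun y _ => by simp)
  · intro y hy
    simp_all
  · intro y hy
    simp only [coe_filter, mem_univ, true_and, Set.mem_ofPred_eq, add_sub_cancel_right] at hy ⊢
    refine ⟨hy, fun h0 => h ?_⟩
    rw [← hy, eq_neg_of_add_eq_zero_left h0, neg_sq]

theorem card_filter_sub_sq_eq_and_ne_zero_of_sq_eq {R : Type*} [CommRing R] [IsDomain R]
    [Fintype R] [DecidableEq R] {c A : R} (h2 : (2 : R) ≠ 0) (hA : A ≠ 0) (h : c ^ 2 = A) :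
    #{y : R | (y - c) ^ 2 = A ∧ y ≠ 0} = 1 := by
  have hc : c ≠ 0 := by rintro rfl; exact hA (by simp [← h])
  rw [card_eq_one]
  refine ⟨2 * c, ?_⟩
  ext y
  simp only [mem_filter, mem_univ, true_and, mem_singleton]
  constructor
  · rintro ⟨hy, hy0⟩
    have : y * (y - 2 * c) = 0 := by linear_combination hy - h
    exact sub_eq_zero.mp ((mul_eq_zero.mp this).resolve_left hy0)
  · rintro rfl
    exact ⟨by linear_combination h, mul_ne_zero h2 hc⟩

theorem Cpl_eq_card_isUnit (p : ℕ) (a : ℤ) (f n ℓ : ℕ) [NeZero ℓ] :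
    Cpl p a f n ℓ = #{x : ZMod (ℓ ^ (4 * n * f ^ 2).factorization ℓ) |
      IsUnit x ∧ (x - ((p + 1 : ℤ))) ^ 2 = ((4 * p + a * f ^ 2 : ℤ))} := by
  rw [Cpl, ← ZMod.card_filter_range_natCast]
  congr 1
  refine filter_congr fun m _ => ?_
  rw [ZMod.isUnit_iff_coprime, Dfun]
  refine and_congr_right fun _ => ?_
  rw [show ((p : ℤ) + 1 - m) ^ 2 - 4 * p - a * f ^ 2 = (m - (p + 1 : ℤ)) ^ 2 - (4 * p + a * f ^ 2)
      by ring, ← Nat.cast_pow, ← ZMod.intCast_zmod_eq_zero_iff_dvd, Int.cast_sub, sub_eq_zero,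
    Int.cast_pow, Int.cast_sub, Int.cast_natCast]

theorem Cpl_of_not_dvd_general (p : ℕ) (f : ℕ) (hf0 : 0 < f) (n : ℕ) (hn : 0 < n) (a : ℤ)
    (ℓ : ℕ) (hℓ : ℓ.Prime) (hℓ2 : ℓ ≠ 2) (hdvd : ℓ ∣ n * f)
    (hnd : ¬ ((ℓ : ℤ) ∣ (4 * (p : ℤ) + a * (f : ℤ) ^ 2))) :
    (¬ ((ℓ : ℤ) ∣ (((p : ℤ) - 1) ^ 2 - a * (f : ℤ) ^ 2)) →
      (Cpl p a f n ℓ : ℤ) = 1 + jacobiSym (4 * (p : ℤ) + a * (f : ℤ) ^ 2) ℓ) ∧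
    (((ℓ : ℤ) ∣ (((p : ℤ) - 1) ^ 2 - a * (f : ℤ) ^ 2)) → Cpl p a f n ℓ = 1) := by
  have := Fact.mk hℓ
  have he : (4 * n * f ^ 2).factorization ℓ ≠ 0 :=
    (hℓ.factorization_pos_of_dvd (by positivity) (hdvd.trans ⟨4 * f, by ring⟩)).ne'
  have hA : ((4 * p + a * f ^ 2 : ℤ) : ZMod ℓ) ≠ 0 := by
    rwa [Ne, ZMod.intCast_zmod_eq_zero_iff_dvd]
  have hcount : Cpl p a f n ℓ =
      #{y : ZMod ℓ | (y - ((p + 1 : ℤ))) ^ 2 = ((4 * p + a * f ^ 2 : ℤ)) ∧ y ≠ 0} := by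
    rw [Cpl_eq_card_isUnit, ← ZMod.card_filter_sub_sq_eq_castHom hℓ2 he hA (· ≠ 0)]
    congr 1
    ext x
    simp only [mem_filter, mem_univ, true_and, ZMod.isUnit_iff_castHom_ne_zero he, and_comm]
  have hdisc : (((p + 1 : ℤ)) : ZMod ℓ) ^ 2 = ((4 * p + a * f ^ 2 : ℤ) : ZMod ℓ) ↔
      (ℓ : ℤ) ∣ ((p : ℤ) - 1) ^ 2 - a * (f : ℤ) ^ 2 := by
    rw [show ((p : ℤ) - 1) ^ 2 - a * f ^ 2 = (p + 1) ^ 2 - (4 * p + a * f ^ 2) by ring,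
      ← ZMod.intCast_zmod_eq_zero_iff_dvd, Int.cast_sub, Int.cast_pow, sub_eq_zero]
  refine ⟨fun h => ?_, fun h => ?_⟩
  · rw [hcount, card_filter_sub_sq_eq_and_ne_zero_of_sq_ne (mt hdisc.mp h), ← Set.toFinset_ofPred,
      legendreSym.card_sqrts ℓ hℓ2, jacobiSym.legendreSym.to_jacobiSym]
    ring
  · rw [hcount, card_filter_sub_sq_eq_and_ne_zero_of_sq_eq (ZMod.two_ne_zero_of_ne_two hℓ2) hA
      (hdisc.mpr h)]

/-- Lemma 4.2 (David–Smith), first case: `ℓ` an odd prime dividing `nf` with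
`ℓ ∤ 4p + af²`. -/
theorem Cpl_of_not_dvd (p : ℕ) (hp : p.Prime) (hp2 : p ≠ 2)
    (f : ℕ) (hf : Odd f) (hf0 : 0 < f) (n : ℕ) (hn : 0 < n)
    (a : ℤ) (ha : a % 4 = 1)
    (ℓ : ℕ) (hℓ : ℓ.Prime) (hℓ2 : ℓ ≠ 2) (hdvd : ℓ ∣ n * f)
    (hnd : ¬ ((ℓ : ℤ) ∣ (4 * (p : ℤ) + a * (f : ℤ) ^ 2))) :
    (¬ ((ℓ : ℤ) ∣ (((p : ℤ) - 1) ^ 2 - a * (f : ℤ) ^ 2)) →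
      (Cpl p a f n ℓ : ℤ) = 1 + jacobiSym (4 * (p : ℤ) + a * (f : ℤ) ^ 2) ℓ) ∧
    (((ℓ : ℤ) ∣ (((p : ℤ) - 1) ^ 2 - a * (f : ℤ) ^ 2)) → Cpl p a f n ℓ = 1) :=
  Cpl_of_not_dvd_general p f hf0 n hn a ℓ hℓ hℓ2 hdvd hnd

end
end

section
/- Let p be an odd prime, f an odd positive integer, n a positive integer, and a an integer with a ≡ 1 (mod 4). Let ℓ be an odd prime dividing nf, set e := ν_ℓ(4nf²), and suppose ℓ | 4p + af²; set s := ν_ℓ(4p+af²). Then: C_p^{(ℓ)}(a,f,n) = 2·((p+1)/ℓ)²·ℓ^{s/2} if 1 ≤ s < e, s is even, and (((4p+af²)/ℓ^s)/ℓ) = 1; C_p^{(ℓ)}(a,f,n) = ((p+1)/ℓ)²·ℓ^{⌊e/2⌋} if s ≥ e; and C_p^{(ℓ)}(a,f,n) = 0 otherwise. Here (·/ℓ) denotes the Legendre symbol. -/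
open scoped Classical

noncomputable section

open Finset

lemma Qper_iter (d : ℕ) (Q : ℕ → Prop) (hper : ∀ x, Q (x + d) ↔ Q x) :
    ∀ k x, Q (x + k * d) ↔ Q x := by
  intro k
  induction k with
  | zero => simp
  | succ k ih =>
    intro x
    have h : x + (k+1) * d = (x + k * d) + d := by ring
    rw [h, hper, ih]

lemma Q_mod (d : ℕ) (hd : 0 < d) (Q : ℕ → Prop) (hper : ∀ x, Q (x + d) ↔ Q x) (x : ℕ) :
    Q (x % d) ↔ Q x := by
  conv_rhs => rw [← Nat.mod_add_div' x d]
  rw [Qper_iter d Q hper]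

lemma card_filter_mul (d t : ℕ) (Q : ℕ → Prop) [DecidablePred Q]
    (hper : ∀ x, Q (x + d) ↔ Q x) :
    ((range (t * d)).filter Q).card = t * ((range d).filter Q).card := by
  induction t with
  | zero => simp
  | succ t ih =>
    have h1 : (t + 1) * d = t * d + d := by ring
    rw [h1, Finset.range_add, Finset.filter_union, Finset.card_union_of_disjoint, ih]
    · have h2 : ((Finset.map (addLeftEmbedding (t*d)) (range d)).filter Q).card
          = ((range d).filter (fun x => Q (t*d + x))).card := by
        rw [Finset.filter_map, Finset.card_map]
        rfl
      rw [h2]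
      have h3 : ((range d).filter (fun x => Q (t*d + x))).card = ((range d).filter Q).card := by
        congr 1
        apply Finset.filter_congr
        intro x _
        have h4 := Qper_iter d Q hper t x
        rw [Nat.add_comm (t*d) x]
        simp only [h4]
      rw [h3]; ring
    · rw [Finset.disjoint_left]
      intro x hx hy
      simp only [Finset.mem_filter, Finset.mem_range] at hx
      simp only [Finset.mem_filter, Finset.mem_map, addLeftEmbedding] at hy
      obtain ⟨⟨y, hy1, hy2⟩, _⟩ := hy
      simp only [Function.Embedding.coeFn_mk] at hy2
      omega

lemma card_filter_shift (d : ℕ) (hd : 0 < d) (Q : ℕ → Prop) [DecidablePred Q]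
    (hper : ∀ x, Q (x + d) ↔ Q x) (c : ℕ) :
    ((range d).filter (fun m => Q (m + c))).card = ((range d).filter Q).card := by
  apply Finset.card_bij (fun m _ => (m + c) % d)
  · intro m hm
    simp only [Finset.mem_filter, Finset.mem_range] at hm ⊢
    exact ⟨Nat.mod_lt _ hd, (Q_mod d hd Q hper _).2 hm.2⟩
  · intro m1 hm1 m2 hm2 h
    simp only [Finset.mem_filter, Finset.mem_range] at hm1 hm2
    have h1 : m1 ≡ m2 [MOD d] := Nat.ModEq.add_right_cancel' c h
    have h2 : m1 % d = m2 % d := h1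
    rw [Nat.mod_eq_of_lt hm1.1, Nat.mod_eq_of_lt hm2.1] at h2
    exact h2
  · intro y hy
    simp only [Finset.mem_filter, Finset.mem_range] at hy
    refine ⟨(y + d - c % d) % d, Finset.mem_filter.2 ⟨Finset.mem_range.2 (Nat.mod_lt _ hd), ?_⟩, ?_⟩
    · rw [Q_mod d hd (fun m => Q (m + c)) (fun x => by simpa [Nat.add_right_comm] using hper (x + c))]
      have hcd : c % d < d := Nat.mod_lt _ hd
      have h5 : (y + d - c % d) + c = y + (1 + c / d) * d := by
        have h := Nat.div_add_mod c d
        have h2 : (1 + c/d) * d = d + d * (c/d) := by ring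
        omega
      rw [h5, Qper_iter d Q hper]; exact hy.2
    · have hcd : c % d < d := Nat.mod_lt _ hd
      have h5 : (y + d - c % d) + c = y + (1 + c / d) * d := by
        have h := Nat.div_add_mod c d
        have h2 : (1 + c/d) * d = d + d * (c/d) := by ring
        omega
      rw [Nat.mod_add_mod, h5, Nat.add_mul_mod_self_right, Nat.mod_eq_of_lt hy.1]

-- count multiples of c in range (c*n)
lemma card_multiples' (c n : ℕ) (hc : 0 < c) :
    ((range (c * n)).filter (fun x => c ∣ x)).card = n := by
  have : (range (c*n)).filter (fun x => c ∣ x) = (range n).image (fun j => c * j) := by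
    ext x
    simp only [Finset.mem_filter, Finset.mem_range, Finset.mem_image]
    constructor
    · rintro ⟨hlt, j, rfl⟩
      exact ⟨j, by exact lt_of_mul_lt_mul_left hlt (Nat.zero_le c), rfl⟩
    · rintro ⟨j, hj, rfl⟩
      exact ⟨(Nat.mul_lt_mul_left hc).2 hj, j, rfl⟩
  rw [this, Finset.card_image_of_injective _ (fun a b h => by
    exact Nat.eq_of_mul_eq_mul_left hc h), Finset.card_range]

/-- number of `x < ℓ^k` with `ℓ^k ∣ x^2 - A` -/
def cnt (ℓ k : ℕ) (A : ℤ) : ℕ :=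
  ((range (ℓ ^ k)).filter (fun x : ℕ => (ℓ:ℤ) ^ k ∣ (x:ℤ) ^ 2 - A)).card

lemma cnt_congr (ℓ k : ℕ) {A B : ℤ} (h : (ℓ:ℤ)^k ∣ A - B) : cnt ℓ k A = cnt ℓ k B := by
  unfold cnt
  congr 1
  apply Finset.filter_congr
  intro x _
  constructor
  · intro hx
    have heq : (x:ℤ)^2 - B = ((x:ℤ)^2 - A) + (A - B) := by ring
    rw [heq]; exact dvd_add hx h
  · intro hx
    have heq : (x:ℤ)^2 - A = ((x:ℤ)^2 - B) - (A - B) := by ring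
    rw [heq]; exact dvd_sub hx h

-- case s ≥ e : cnt ℓ e A = ℓ^(e/2) when ℓ^e ∣ A
lemma cnt_of_dvd (ℓ : ℕ) (hℓ : ℓ.Prime) (e : ℕ) {A : ℤ} (h : (ℓ:ℤ)^e ∣ A) :
    cnt ℓ e A = ℓ ^ (e / 2) := by
  have h0 : cnt ℓ e A = cnt ℓ e 0 := cnt_congr ℓ e (by simpa using h)
  rw [h0]
  unfold cnt
  have hstep : ∀ x : ℕ, ((ℓ:ℤ)^e ∣ (x:ℤ)^2 - 0) ↔ ℓ ^ (e - e/2) ∣ x := by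
    intro x
    rw [sub_zero]
    have hcast : ((ℓ:ℤ)^e ∣ (x:ℤ)^2) ↔ ℓ^e ∣ x^2 := by
      constructor
      · intro hh; exact_mod_cast (by push_cast; exact hh : ((ℓ^e : ℕ) :ℤ) ∣ ((x^2 : ℕ):ℤ))
      · intro hh; exact_mod_cast (by exact_mod_cast hh : ((ℓ^e : ℕ):ℤ) ∣ ((x^2:ℕ):ℤ))
    rw [hcast]
    rcases Nat.eq_zero_or_pos x with rfl | hx
    · simp
    · rw [Nat.Prime.pow_dvd_iff_le_factorization hℓ (by positivity),
          Nat.Prime.pow_dvd_iff_le_factorization hℓ (by omega)]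
      rw [Nat.factorization_pow]
      simp only [Finsupp.smul_apply, smul_eq_mul]
      omega
  have : (range (ℓ^e)).filter (fun x : ℕ => (ℓ:ℤ)^e ∣ (x:ℤ)^2 - 0)
       = (range (ℓ^e)).filter (fun x => ℓ^(e - e/2) ∣ x) := by
    apply Finset.filter_congr; intro x _; simp only [hstep]
  rw [this]
  have hsplit : ℓ^e = ℓ^(e - e/2) * ℓ^(e/2) := by
    rw [← pow_add]; congr 1; omega
  rw [hsplit]
  exact card_multiples' _ _ (pow_pos hℓ.pos _)

lemma int_prime (ℓ : ℕ) (hℓ : ℓ.Prime) : Prime (ℓ:ℤ) := Nat.prime_iff_prime_int.mp hℓ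

lemma not_dvd_two (ℓ : ℕ) (hℓ : ℓ.Prime) (hℓ2 : ℓ ≠ 2) : ¬ (ℓ:ℤ) ∣ 2 := by
  intro h
  have h2 : ℓ ∣ 2 := by exact_mod_cast h
  exact hℓ2 ((Nat.prime_dvd_prime_iff_eq hℓ Nat.prime_two).mp h2)

lemma not_dvd_y (ℓ : ℕ) (hℓ : ℓ.Prime) {u y : ℤ} (hu : ¬ (ℓ:ℤ) ∣ u)
    (hy : (ℓ:ℤ) ∣ y^2 - u) : ¬ (ℓ:ℤ) ∣ y := by
  intro hdy
  apply hu
  have h1 : (ℓ:ℤ) ∣ y * y := hdy.mul_right y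
  have h2 : u = y * y - (y^2 - u) := by ring
  rw [h2]; exact dvd_sub h1 hy

lemma sq_lift (ℓ : ℕ) (hℓ : ℓ.Prime) (hℓ2 : ℓ ≠ 2) {u : ℤ} (hu : ¬ (ℓ:ℤ) ∣ u)
    {j : ℕ} (hj : 1 ≤ j) {y : ℤ} (hy : (ℓ:ℤ)^j ∣ y^2 - u) :
    ∃ t : ℤ, (ℓ:ℤ)^(j+1) ∣ (y + t * (ℓ:ℤ)^j)^2 - u := by
  obtain ⟨w, hw⟩ := hy
  have hy1 : (ℓ:ℤ) ∣ y^2 - u := dvd_trans (dvd_pow_self _ (by omega)) ⟨w, hw⟩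
  have hℓy : ¬ (ℓ:ℤ) ∣ y := not_dvd_y ℓ hℓ hu hy1
  have hℓ2y : ¬ (ℓ:ℤ) ∣ 2 * y := by
    intro h
    rcases (int_prime ℓ hℓ).dvd_mul.mp h with h | h
    · exact not_dvd_two ℓ hℓ hℓ2 h
    · exact hℓy h
  have hcop : IsCoprime ((ℓ:ℤ)) (2*y) :=
    ((int_prime ℓ hℓ).coprime_iff_not_dvd).mpr hℓ2y
  obtain ⟨c, v, hcv⟩ := hcop
  refine ⟨-(w*v), ?_⟩
  obtain ⟨z, hz⟩ : ∃ z, w + 2*y*(-(w*v)) = (ℓ:ℤ) * z :=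
    ⟨w*c, by linear_combination -w * hcv⟩
  have expand : (y + -(w*v) * (ℓ:ℤ)^j)^2 - u
      = (ℓ:ℤ)^j * (w + 2*y*(-(w*v))) + (-(w*v))^2 * ((ℓ:ℤ)^j * (ℓ:ℤ)^j) := by
    linear_combination hw
  rw [expand, hz]
  apply dvd_add
  · exact ⟨z, by rw [pow_succ]; ring⟩
  · refine Dvd.dvd.mul_left ?_ _
    rw [← pow_add]
    exact pow_dvd_pow _ (by omega)

lemma sq_root_exists (ℓ : ℕ) (hℓ : ℓ.Prime) (hℓ2 : ℓ ≠ 2) {u : ℤ} (hu : ¬ (ℓ:ℤ) ∣ u)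
    (hex : ∃ y : ℤ, (ℓ:ℤ) ∣ y^2 - u) (k : ℕ) :
    ∃ y : ℤ, (ℓ:ℤ)^k ∣ y^2 - u := by
  induction k with
  | zero => exact ⟨0, by simpa using one_dvd _⟩
  | succ k ih =>
    rcases Nat.eq_zero_or_pos k with rfl | hk'
    · simpa using hex
    · obtain ⟨y, hy⟩ := ih
      obtain ⟨t, ht⟩ := sq_lift ℓ hℓ hℓ2 hu hk' hy
      exact ⟨_, ht⟩

lemma jacobi_one_iff (ℓ : ℕ) (hℓ : ℓ.Prime) (hℓ2 : ℓ ≠ 2) {u : ℤ} (hu : ¬ (ℓ:ℤ) ∣ u) :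
    jacobiSym u ℓ = 1 ↔ ∃ y : ℤ, (ℓ:ℤ) ∣ y^2 - u := by
  haveI : Fact ℓ.Prime := ⟨hℓ⟩
  rw [← jacobiSym.legendreSym.to_jacobiSym]
  have hne : (u : ZMod ℓ) ≠ 0 := by
    rw [Ne, ZMod.intCast_zmod_eq_zero_iff_dvd]; exact hu
  rw [legendreSym.eq_one_iff ℓ hne]
  constructor
  · rintro ⟨r, hr⟩
    refine ⟨(r.val : ℤ), ?_⟩
    rw [← ZMod.intCast_zmod_eq_zero_iff_dvd]
    push_cast
    rw [ZMod.natCast_val, ZMod.cast_id]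
    rw [hr]; ring
  · rintro ⟨y, hy⟩
    refine ⟨(y : ZMod ℓ), ?_⟩
    have h0 : (((y^2 - u : ℤ)) : ZMod ℓ) = 0 := (ZMod.intCast_zmod_eq_zero_iff_dvd _ _).2 hy
    push_cast at h0
    rw [← sq]
    linear_combination -h0

lemma cnt_unit (ℓ : ℕ) (hℓ : ℓ.Prime) (hℓ2 : ℓ ≠ 2) (k : ℕ) (hk : 1 ≤ k)
    {u : ℤ} (hu : ¬ (ℓ:ℤ) ∣ u) :
    cnt ℓ k u = if jacobiSym u ℓ = 1 then 2 else 0 := by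
  have hd0 : 0 < ℓ ^ k := pow_pos hℓ.pos k
  by_cases hj : jacobiSym u ℓ = 1
  · rw [if_pos hj]
    obtain ⟨y0, hy0⟩ := sq_root_exists ℓ hℓ hℓ2 hu ((jacobi_one_iff ℓ hℓ hℓ2 hu).1 hj) k
    set d : ℕ := ℓ ^ k with hdd
    have hd1 : (1:ℤ) < (d:ℤ) := by
      have : 1 < ℓ ^ k := by
        calc 1 < ℓ := hℓ.one_lt
        _ ≤ ℓ ^ k := Nat.le_self_pow (by omega) ℓ
      exact_mod_cast this
    have hℓy0 : ¬ (ℓ:ℤ) ∣ y0 :=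
      not_dvd_y ℓ hℓ hu (dvd_trans (dvd_pow_self _ (by omega)) hy0)
    set a : ℕ := (y0 % (d:ℤ)).toNat with haa
    set b : ℕ := ((-y0) % (d:ℤ)).toNat with hbb
    have haz : (a:ℤ) = y0 % (d:ℤ) := Int.toNat_of_nonneg (Int.emod_nonneg _ (by omega))
    have hbz : (b:ℤ) = (-y0) % (d:ℤ) := Int.toNat_of_nonneg (Int.emod_nonneg _ (by omega))
    have halt : a < d := by
      have := Int.emod_lt_of_pos y0 (by omega : (0:ℤ) < d)
      omega
    have hblt : b < d := by
      have := Int.emod_lt_of_pos (-y0) (by omega : (0:ℤ) < d)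
      omega
    have hamod : (d:ℤ) ∣ (a:ℤ) - y0 := by
      rw [haz, Int.emod_def]; exact ⟨-(y0/(d:ℤ)), by ring⟩
    have hbmod : (d:ℤ) ∣ (b:ℤ) + y0 := by
      rw [hbz, Int.emod_def]; exact ⟨-((-y0)/(d:ℤ)), by ring⟩
    have hdl : (ℓ:ℤ) ∣ (d:ℤ) := by
      rw [hdd]; push_cast; exact dvd_pow_self _ (by omega)
    have hab : a ≠ b := by
      intro h
      apply hℓy0
      have h2 : (ℓ:ℤ) ∣ 2 * y0 := by
        have hd2 : (d:ℤ) ∣ 2 * y0 := by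
          rw [h] at hamod
          have h5 := dvd_sub hbmod hamod
          have heq : (b:ℤ) + y0 - ((b:ℤ) - y0) = 2 * y0 := by ring
          rwa [heq] at h5
        exact hdl.trans hd2
      rcases (int_prime ℓ hℓ).dvd_mul.mp h2 with h3 | h3
      · exact absurd h3 (not_dvd_two ℓ hℓ hℓ2)
      · exact h3
    have hset : (range d).filter (fun x : ℕ => (ℓ:ℤ) ^ k ∣ (x:ℤ) ^ 2 - u) = {a, b} := by
      ext x
      simp only [Finset.mem_filter, Finset.mem_range, Finset.mem_insert, Finset.mem_singleton]
      have hdk : ((ℓ:ℤ))^k = (d:ℤ) := by rw [hdd]; push_cast; ring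
      constructor
      · rintro ⟨hx, hxd⟩
        rw [hdk] at hxd
        have hdiff : (d:ℤ) ∣ ((x:ℤ) - y0) * ((x:ℤ) + y0) := by
          have h1 : (d:ℤ) ∣ (x:ℤ)^2 - y0^2 := by
            have := dvd_sub hxd (hdk ▸ hy0)
            have heq : (x:ℤ)^2 - u - (y0^2 - u) = (x:ℤ)^2 - y0^2 := by ring
            rwa [heq] at this
          have heq : (x:ℤ)^2 - y0^2 = ((x:ℤ) - y0) * ((x:ℤ) + y0) := by ring
          rwa [heq] at h1
        have hnotboth : ¬ ((ℓ:ℤ) ∣ (x:ℤ) - y0 ∧ (ℓ:ℤ) ∣ (x:ℤ) + y0) := by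
          rintro ⟨h1, h2⟩
          apply hℓy0
          have h3 : (ℓ:ℤ) ∣ 2 * y0 := by
            have := dvd_sub h2 h1
            have heq : (x:ℤ) + y0 - ((x:ℤ) - y0) = 2 * y0 := by ring
            rwa [heq] at this
          rcases (int_prime ℓ hℓ).dvd_mul.mp h3 with h4 | h4
          · exact absurd h4 (not_dvd_two ℓ hℓ hℓ2)
          · exact h4
        have key : (d:ℤ) ∣ (x:ℤ) - y0 ∨ (d:ℤ) ∣ (x:ℤ) + y0 := by
          by_cases hc : (ℓ:ℤ) ∣ (x:ℤ) + y0
          · right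
            by_cases hc2 : (ℓ:ℤ) ∣ (x:ℤ) - y0
            · exact absurd ⟨hc2, hc⟩ hnotboth
            · have hcop : IsCoprime ((d:ℤ)) ((x:ℤ) - y0) := by
                rw [hdd]; push_cast
                exact (((int_prime ℓ hℓ).coprime_iff_not_dvd).mpr hc2).pow_left
              exact hcop.dvd_of_dvd_mul_left hdiff
          · left
            have hcop : IsCoprime ((d:ℤ)) ((x:ℤ) + y0) := by
              rw [hdd]; push_cast
              exact (((int_prime ℓ hℓ).coprime_iff_not_dvd).mpr hc).pow_left
            exact hcop.dvd_of_dvd_mul_right hdiff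
        rcases key with h1 | h1
        · left
          have : (d:ℤ) ∣ (x:ℤ) - (a:ℤ) := by
            have := dvd_sub h1 hamod
            have heq : (x:ℤ) - y0 - ((a:ℤ) - y0) = (x:ℤ) - (a:ℤ) := by ring
            rwa [heq] at this
          have hlt : |(x:ℤ) - (a:ℤ)| < (d:ℤ) := by
            rw [abs_lt]; omega
          have := Int.eq_zero_of_abs_lt_dvd this hlt
          omega
        · right
          have : (d:ℤ) ∣ (x:ℤ) - (b:ℤ) := by
            have := dvd_sub h1 hbmod
            have heq : (x:ℤ) + y0 - ((b:ℤ) + y0) = (x:ℤ) - (b:ℤ) := by ring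
            rwa [heq] at this
          have hlt : |(x:ℤ) - (b:ℤ)| < (d:ℤ) := by
            rw [abs_lt]; omega
          have := Int.eq_zero_of_abs_lt_dvd this hlt
          omega
      · rintro (rfl | rfl)
        · refine ⟨halt, ?_⟩
          rw [hdk]
          obtain ⟨z, hz⟩ := hamod
          have heq : (a:ℤ)^2 - u = (y0^2 - u) + ((d:ℤ)*z) * (2*y0 + (d:ℤ)*z) := by
            have : (a:ℤ) = y0 + (d:ℤ)*z := by omega
            rw [this]; ring
          rw [heq]
          exact dvd_add (hdk ▸ hy0) ⟨z * (2*y0 + (d:ℤ)*z), by ring⟩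
        · refine ⟨hblt, ?_⟩
          rw [hdk]
          obtain ⟨z, hz⟩ := hbmod
          have heq : (b:ℤ)^2 - u = (y0^2 - u) + ((d:ℤ)*z) * (-2*y0 + (d:ℤ)*z) := by
            have : (b:ℤ) = -y0 + (d:ℤ)*z := by omega
            rw [this]; ring
          rw [heq]
          exact dvd_add (hdk ▸ hy0) ⟨z * (-2*y0 + (d:ℤ)*z), by ring⟩
    unfold cnt
    rw [← hdd, hset, Finset.card_insert_of_notMem (by simpa using hab), Finset.card_singleton]
  · rw [if_neg hj]
    unfold cnt
    rw [Finset.card_eq_zero, Finset.filter_eq_empty_iff]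
    intro x _
    intro hdvd
    exact hj ((jacobi_one_iff ℓ hℓ hℓ2 hu).2
      ⟨(x:ℤ), dvd_trans (dvd_pow_self _ (by omega)) hdvd⟩)

lemma per_dvd (c : ℤ) (dn : ℕ) (hdc : c ∣ (dn:ℤ)) (u : ℤ) (x : ℕ) :
    (c ∣ ((x + dn : ℕ):ℤ)^2 - u) ↔ (c ∣ (x:ℤ)^2 - u) := by
  push_cast
  have hdvd : c ∣ ((dn:ℤ)) * (2*(x:ℤ) + dn) := hdc.mul_right _
  constructor
  · intro h
    have h2 := dvd_sub h hdvd
    have heq : ((x:ℤ)+dn)^2 - u - ((dn:ℤ)) * (2*(x:ℤ) + dn) = (x:ℤ)^2 - u := by ring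
    rwa [heq] at h2
  · intro h
    have h2 := dvd_add h hdvd
    have heq : (x:ℤ)^2 - u + ((dn:ℤ)) * (2*(x:ℤ) + dn) = ((x:ℤ)+dn)^2 - u := by ring
    rwa [heq] at h2

lemma card_range_pow_dvd (ℓ : ℕ) (hℓ : ℓ.Prime) {k K : ℕ} (hkK : k ≤ K) (u : ℤ) :
    ((range (ℓ^K)).filter (fun y : ℕ => (ℓ:ℤ)^k ∣ (y:ℤ)^2 - u)).card
      = ℓ^(K-k) * cnt ℓ k u := by
  have h1 : ℓ^K = ℓ^(K-k) * ℓ^k := by rw [← pow_add]; congr 1; omega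
  rw [h1]
  apply card_filter_mul
  intro x
  apply per_dvd
  push_cast
  exact dvd_refl _

lemma cnt_even_case (ℓ : ℕ) (hℓ : ℓ.Prime) (hℓ2 : ℓ ≠ 2) {e s : ℕ} (hse : s < e)
    (hs : Even s) {u : ℤ} (hu : ¬ (ℓ:ℤ) ∣ u) :
    cnt ℓ e ((ℓ:ℤ)^s * u) = ℓ^(s/2) * (if jacobiSym u ℓ = 1 then 2 else 0) := by
  obtain ⟨h, rfl⟩ : ∃ h, s = 2 * h := ⟨s/2, by rcases hs with ⟨t, ht⟩; omega⟩
  have hs2 : (2*h)/2 = h := by omega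
  rw [hs2]
  set c : ℕ := ℓ ^ h with hcc
  have hc0 : 0 < c := pow_pos hℓ.pos h
  have himg : (range (ℓ^e)).filter (fun x : ℕ => (ℓ:ℤ)^e ∣ (x:ℤ)^2 - ((ℓ:ℤ)^(2*h) * u))
      = ((range (ℓ^(e - h))).filter (fun y : ℕ => (ℓ:ℤ)^(e - 2*h) ∣ (y:ℤ)^2 - u)).image
          (fun y => c * y) := by
    have hcsq : (c:ℤ) * (c:ℤ) = (ℓ:ℤ)^(2*h) := by
      rw [hcc]; push_cast; rw [← pow_add]; congr 1; omega
    have hepow : (ℓ:ℤ)^e = (ℓ:ℤ)^(2*h) * (ℓ:ℤ)^(e - 2*h) := by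
      rw [← pow_add]; congr 1; omega
    ext x
    simp only [Finset.mem_filter, Finset.mem_range, Finset.mem_image]
    constructor
    · rintro ⟨hx, hxd⟩
      have hsx : (ℓ:ℤ)^(2*h) ∣ (x:ℤ)^2 := by
        have h1 : (ℓ:ℤ)^(2*h) ∣ (x:ℤ)^2 - (ℓ:ℤ)^(2*h) * u :=
          (pow_dvd_pow _ (by omega)).trans hxd
        have h2 := dvd_add h1 (Dvd.intro u rfl)
        have heq : (x:ℤ)^2 - (ℓ:ℤ)^(2*h) * u + (ℓ:ℤ)^(2*h) * u = (x:ℤ)^2 := by ring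
        rwa [heq] at h2
      have hsxn : ℓ^(2*h) ∣ x^2 := by
        have : ((ℓ^(2*h) : ℕ):ℤ) ∣ ((x^2 : ℕ):ℤ) := by push_cast; exact hsx
        exact_mod_cast this
      have hcx : c ∣ x := by
        rcases Nat.eq_zero_or_pos x with rfl | hx0
        · exact dvd_zero c
        · rw [hcc]
          rw [Nat.Prime.pow_dvd_iff_le_factorization hℓ (by positivity)] at hsxn
          rw [Nat.Prime.pow_dvd_iff_le_factorization hℓ (by omega)]
          rw [Nat.factorization_pow] at hsxn
          simp only [Finsupp.smul_apply, smul_eq_mul] at hsxn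
          omega
      obtain ⟨y, rfl⟩ := hcx
      refine ⟨y, ⟨?_, ?_⟩, rfl⟩
      · have : c * y < ℓ ^ e := hx
        have hle : ℓ^e = c * ℓ^(e-h) := by
          rw [hcc, ← pow_add]; congr 1; omega
        rw [hle] at this
        exact lt_of_mul_lt_mul_left this (Nat.zero_le c)
      · have hxd2 : (ℓ:ℤ)^(2*h) * (ℓ:ℤ)^(e - 2*h) ∣ (ℓ:ℤ)^(2*h) * ((y:ℤ)^2 - u) := by
          rw [← hepow]
          have heq : (ℓ:ℤ)^(2*h) * ((y:ℤ)^2 - u) = ((c*y : ℕ):ℤ)^2 - ((ℓ:ℤ)^(2*h) * u) := by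
            push_cast; rw [← hcsq]; ring
          rw [heq]; exact hxd
        exact (mul_dvd_mul_iff_left (a := (ℓ:ℤ)^(2*h)) (pow_ne_zero _ (Int.natCast_ne_zero.mpr hℓ.ne_zero))).mp hxd2
    · rintro ⟨y, ⟨hy, hyd⟩, rfl⟩
      constructor
      · have hle : ℓ^e = c * ℓ^(e-h) := by
          rw [hcc, ← pow_add]; congr 1; omega
        rw [hle]
        exact (Nat.mul_lt_mul_left hc0).2 hy
      · rw [hepow]
        have heq : ((c*y : ℕ):ℤ)^2 - ((ℓ:ℤ)^(2*h) * u) = (ℓ:ℤ)^(2*h) * ((y:ℤ)^2 - u) := by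
          push_cast; rw [← hcsq]; ring
        rw [heq]
        exact mul_dvd_mul_left _ hyd
  unfold cnt
  rw [himg, Finset.card_image_of_injective _ (fun a b hab => by
    exact Nat.eq_of_mul_eq_mul_left hc0 hab)]
  rw [card_range_pow_dvd ℓ hℓ (by omega) u]
  have : e - h - (e - 2*h) = h := by omega
  rw [this, cnt_unit ℓ hℓ hℓ2 (e - 2*h) (by omega) hu]

lemma cnt_odd_case (ℓ : ℕ) (hℓ : ℓ.Prime) {e s : ℕ} (hse : s < e) (hs : ¬ Even s)
    {A : ℤ} (hA : (ℓ:ℤ)^s ∣ A) (hA2 : ¬ (ℓ:ℤ)^(s+1) ∣ A) :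
    cnt ℓ e A = 0 := by
  unfold cnt
  rw [Finset.card_eq_zero, Finset.filter_eq_empty_iff]
  intro x _
  intro hxd
  have hsx : (ℓ:ℤ)^s ∣ (x:ℤ)^2 := by
    have h1 : (ℓ:ℤ)^s ∣ (x:ℤ)^2 - A := (pow_dvd_pow _ (by omega)).trans hxd
    have h2 := dvd_add h1 hA
    have heq : (x:ℤ)^2 - A + A = (x:ℤ)^2 := by ring
    rwa [heq] at h2
  have hs1x : ¬ (ℓ:ℤ)^(s+1) ∣ (x:ℤ)^2 := by
    intro h
    apply hA2
    have h1 : (ℓ:ℤ)^(s+1) ∣ (x:ℤ)^2 - A := (pow_dvd_pow _ (by omega)).trans hxd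
    have h2 := dvd_sub h h1
    have heq : (x:ℤ)^2 - ((x:ℤ)^2 - A) = A := by ring
    rwa [heq] at h2
  have hx0 : x ≠ 0 := by
    rintro rfl
    exact hs1x (by simp)
  have hsxn : ℓ^s ∣ x^2 := by
    have : ((ℓ^s : ℕ):ℤ) ∣ ((x^2 : ℕ):ℤ) := by push_cast; exact hsx
    exact_mod_cast this
  have hs1xn : ¬ ℓ^(s+1) ∣ x^2 := by
    intro h
    exact hs1x (by
      have : ((ℓ^(s+1) : ℕ):ℤ) ∣ ((x^2 : ℕ):ℤ) := by exact_mod_cast h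
      push_cast at this; exact this)
  rw [Nat.Prime.pow_dvd_iff_le_factorization hℓ (by positivity)] at hsxn
  rw [Nat.Prime.pow_dvd_iff_le_factorization hℓ (by positivity)] at hs1xn
  rw [Nat.factorization_pow] at hsxn hs1xn
  simp only [Finsupp.smul_apply, smul_eq_mul] at hsxn hs1xn
  rw [Nat.even_iff] at hs
  omega

lemma Cpl_eq_cnt (p : ℕ) (a : ℤ) (f n ℓ : ℕ) (hℓ : ℓ.Prime)
    (he : 1 ≤ (4*n*f^2).factorization ℓ)
    (hd : (ℓ:ℤ) ∣ (4*(p:ℤ) + a*(f:ℤ)^2)) :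
    Cpl p a f n ℓ = if ℓ ∣ (p+1) then 0
      else cnt ℓ ((4*n*f^2).factorization ℓ) (4*(p:ℤ) + a*(f:ℤ)^2) := by
  set e := (4*n*f^2).factorization ℓ with hee
  set A : ℤ := 4*(p:ℤ) + a*(f:ℤ)^2 with hAA
  have hd0 : 0 < ℓ ^ e := pow_pos hℓ.pos e
  have hprime := int_prime ℓ hℓ
  have hld : (ℓ:ℤ) ∣ (ℓ:ℤ)^e := dvd_pow_self _ (by omega)
  have hcop_iff : ∀ m : ℕ, Nat.Coprime m (ℓ^e) ↔ ¬ ℓ ∣ m := by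
    intro m
    rw [Nat.coprime_pow_right_iff (by omega), Nat.coprime_comm]
    exact Nat.Prime.coprime_iff_not_dvd hℓ
  -- if m satisfies the congruence then ℓ ∣ p + 1 - m
  have hkey : ∀ m : ℕ, ((ℓ:ℤ)^e ∣ (((p:ℤ)+1-(m:ℤ))^2 - A)) → (ℓ:ℤ) ∣ ((p:ℤ)+1-(m:ℤ)) := by
    intro m hm
    have h1 : (ℓ:ℤ) ∣ ((p:ℤ)+1-(m:ℤ))^2 := by
      have h2 := dvd_add (hld.trans hm) hd
      have heq : ((p:ℤ)+1-(m:ℤ))^2 - A + (4*(p:ℤ) + a*(f:ℤ)^2) = ((p:ℤ)+1-(m:ℤ))^2 := by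
        rw [hAA]; ring
      rwa [heq] at h2
    exact hprime.dvd_of_dvd_pow h1
  have hstep1 : Cpl p a f n ℓ = ((range (ℓ^e)).filter
      (fun m : ℕ => (¬ ℓ ∣ m) ∧ (ℓ:ℤ)^e ∣ (((p:ℤ)+1-(m:ℤ))^2 - A))).card := by
    unfold Cpl Dfun
    congr 1
    apply Finset.filter_congr
    intro m _
    have h1 : ((p:ℤ) + 1 - (m:ℤ))^2 - 4*(p:ℤ) - (a*(f:ℤ)^2) = ((p:ℤ)+1-(m:ℤ))^2 - A := by
      rw [hAA]; ring
    have h2 : (((p:ℤ) + 1 - (m:ℤ))^2 - 4*(p:ℤ)) - a*(f:ℤ)^2 = ((p:ℤ)+1-(m:ℤ))^2 - A := by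
      rw [hAA]; ring
    rw [hcop_iff m]
    constructor
    · rintro ⟨h3, h4⟩; exact ⟨h3, by rw [← h2]; convert h4 using 2⟩
    · rintro ⟨h3, h4⟩; exact ⟨h3, by rw [← h2] at h4; convert h4 using 2⟩
  by_cases hpm : ℓ ∣ (p+1)
  · rw [if_pos hpm, hstep1, Finset.card_eq_zero, Finset.filter_eq_empty_iff]
    rintro m _ ⟨hm, hdvd⟩
    apply hm
    have h1 : (ℓ:ℤ) ∣ ((p:ℤ)+1-(m:ℤ)) := hkey m hdvd
    have h2 : (ℓ:ℤ) ∣ ((p:ℤ)+1) := by exact_mod_cast Int.natCast_dvd_natCast.mpr hpm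
    have h3 : (ℓ:ℤ) ∣ (m:ℤ) := by
      have := dvd_sub h2 h1
      have heq : ((p:ℤ)+1) - ((p:ℤ)+1-(m:ℤ)) = (m:ℤ) := by ring
      rwa [heq] at this
    exact_mod_cast h3
  · rw [if_neg hpm, hstep1]
    have hdrop : ((range (ℓ^e)).filter
        (fun m : ℕ => (¬ ℓ ∣ m) ∧ (ℓ:ℤ)^e ∣ (((p:ℤ)+1-(m:ℤ))^2 - A))).card
        = ((range (ℓ^e)).filter
        (fun m : ℕ => (ℓ:ℤ)^e ∣ (((p:ℤ)+1-(m:ℤ))^2 - A))).card := by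
      congr 1
      apply Finset.filter_congr
      intro m _
      constructor
      · rintro ⟨_, h⟩; exact h
      · intro h
        refine ⟨?_, h⟩
        intro hlm
        apply hpm
        have h1 : (ℓ:ℤ) ∣ ((p:ℤ)+1-(m:ℤ)) := hkey m h
        have h2 : (ℓ:ℤ) ∣ (m:ℤ) := Int.natCast_dvd_natCast.mpr hlm
        have h3 : (ℓ:ℤ) ∣ ((p:ℤ)+1) := by
          have := dvd_add h1 h2
          have heq : ((p:ℤ)+1-(m:ℤ)) + (m:ℤ) = ((p:ℤ)+1) := by ring
          rwa [heq] at this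
        have h4 : (ℓ:ℤ) ∣ ((p+1 : ℕ):ℤ) := by push_cast; exact h3
        exact_mod_cast h4
    rw [hdrop]
    -- shift: m ↦ m + c with c ≡ -(p+1)
    set c : ℕ := (p+1) * (ℓ^e - 1) with hcc
    have hper : ∀ x : ℕ, ((ℓ:ℤ)^e ∣ ((x + ℓ^e : ℕ):ℤ)^2 - A) ↔ ((ℓ:ℤ)^e ∣ (x:ℤ)^2 - A) := by
      intro x
      apply per_dvd
      push_cast; exact dvd_refl _
    have hshift : ((range (ℓ^e)).filter
        (fun m : ℕ => (ℓ:ℤ)^e ∣ (((p:ℤ)+1-(m:ℤ))^2 - A))).card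
        = ((range (ℓ^e)).filter (fun m : ℕ => (ℓ:ℤ)^e ∣ (((m + c : ℕ):ℤ))^2 - A)).card := by
      congr 1
      apply Finset.filter_congr
      intro m _
      have hcast : ((c:ℕ):ℤ) = ((p:ℤ)+1) * ((ℓ:ℤ)^e - 1) := by
        rw [hcc]
        push_cast [Nat.cast_sub hd0]
        ring
      have hdiff : (ℓ:ℤ)^e ∣ ((m + c : ℕ):ℤ)^2 - ((p:ℤ)+1-(m:ℤ))^2 := by
        refine ⟨((p:ℤ)+1) * (2*(m:ℤ) + ((p:ℤ)+1)*((ℓ:ℤ)^e - 1) - ((p:ℤ)+1)), ?_⟩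
        push_cast
        rw [hcc]
        push_cast [Nat.cast_sub hd0]
        ring
      constructor
      · intro h
        have h2 := dvd_add h hdiff
        have heq : ((p:ℤ)+1-(m:ℤ))^2 - A + (((m + c : ℕ):ℤ)^2 - ((p:ℤ)+1-(m:ℤ))^2)
            = ((m + c : ℕ):ℤ)^2 - A := by ring
        rwa [heq] at h2
      · intro h
        have h2 := dvd_sub h hdiff
        have heq : ((m + c : ℕ):ℤ)^2 - A - (((m + c : ℕ):ℤ)^2 - ((p:ℤ)+1-(m:ℤ))^2)
            = ((p:ℤ)+1-(m:ℤ))^2 - A := by ring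
        rwa [heq] at h2
    rw [hshift]
    exact card_filter_shift (ℓ^e) hd0 (fun x : ℕ => (ℓ:ℤ)^e ∣ (x:ℤ)^2 - A)
      (fun x => hper x) c

/-- Lemma 4.2 (David–Smith), second case: `ℓ` an odd prime dividing `nf` with
`ℓ ∣ 4p + af²`, `e = ν_ℓ(4nf²)` and `s = ν_ℓ(4p+af²)`. -/
theorem Cpl_of_dvd (p : ℕ) (hp : p.Prime) (hp2 : p ≠ 2)
    (f : ℕ) (hf : Odd f) (hf0 : 0 < f) (n : ℕ) (hn : 0 < n)
    (a : ℤ) (ha : a % 4 = 1)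
    (ℓ : ℕ) (hℓ : ℓ.Prime) (hℓ2 : ℓ ≠ 2) (hdvd : ℓ ∣ n * f)
    (hd : (ℓ : ℤ) ∣ (4 * (p : ℤ) + a * (f : ℤ) ^ 2)) :
    ((1 ≤ padicValInt ℓ (4 * (p : ℤ) + a * (f : ℤ) ^ 2) ∧
        padicValInt ℓ (4 * (p : ℤ) + a * (f : ℤ) ^ 2) < (4 * n * f ^ 2).factorization ℓ ∧
        Even (padicValInt ℓ (4 * (p : ℤ) + a * (f : ℤ) ^ 2)) ∧
        jacobiSym ((4 * (p : ℤ) + a * (f : ℤ) ^ 2) /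
          (ℓ : ℤ) ^ (padicValInt ℓ (4 * (p : ℤ) + a * (f : ℤ) ^ 2))) ℓ = 1) →
      (Cpl p a f n ℓ : ℤ) = 2 * (jacobiSym ((p : ℤ) + 1) ℓ) ^ 2 *
        (ℓ : ℤ) ^ (padicValInt ℓ (4 * (p : ℤ) + a * (f : ℤ) ^ 2) / 2)) ∧
    (((4 * n * f ^ 2).factorization ℓ ≤ padicValInt ℓ (4 * (p : ℤ) + a * (f : ℤ) ^ 2)) →
      (Cpl p a f n ℓ : ℤ) = (jacobiSym ((p : ℤ) + 1) ℓ) ^ 2 *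
        (ℓ : ℤ) ^ ((4 * n * f ^ 2).factorization ℓ / 2)) ∧
    ((¬ (1 ≤ padicValInt ℓ (4 * (p : ℤ) + a * (f : ℤ) ^ 2) ∧
        padicValInt ℓ (4 * (p : ℤ) + a * (f : ℤ) ^ 2) < (4 * n * f ^ 2).factorization ℓ ∧
        Even (padicValInt ℓ (4 * (p : ℤ) + a * (f : ℤ) ^ 2)) ∧
        jacobiSym ((4 * (p : ℤ) + a * (f : ℤ) ^ 2) /
          (ℓ : ℤ) ^ (padicValInt ℓ (4 * (p : ℤ) + a * (f : ℤ) ^ 2))) ℓ = 1) ∧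
      ¬ ((4 * n * f ^ 2).factorization ℓ ≤ padicValInt ℓ (4 * (p : ℤ) + a * (f : ℤ) ^ 2))) →
      Cpl p a f n ℓ = 0) := by
  haveI : Fact ℓ.Prime := ⟨hℓ⟩
  set A : ℤ := 4 * (p:ℤ) + a * (f:ℤ)^2 with hAA
  set s : ℕ := padicValInt ℓ A with hss
  set e : ℕ := (4*n*f^2).factorization ℓ with hee
  -- A is odd hence nonzero
  have hfo : Odd (f:ℤ) := by exact_mod_cast hf
  have hAodd : Odd A := by
    have h1 : Odd (a * (f:ℤ)^2) := (Int.odd_iff.2 (by omega)).mul (hfo.pow)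
    have h2 : Even (4 * (p:ℤ)) := ⟨2*(p:ℤ), by ring⟩
    exact h2.add_odd h1
  have hA0 : A ≠ 0 := by
    intro h
    rw [h] at hAodd
    simp [Int.odd_iff] at hAodd
  have hs_dvd : (ℓ:ℤ)^s ∣ A := (padicValInt_dvd_iff s A).2 (Or.inr le_rfl)
  have hs_not : ¬ (ℓ:ℤ)^(s+1) ∣ A := by
    intro h
    rcases (padicValInt_dvd_iff (s+1) A).1 h with h | h
    · exact hA0 h
    · omega
  have hs1 : 1 ≤ s := by
    rcases (padicValInt_dvd_iff 1 A).1 (by simpa using hd) with h | h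
    · exact absurd h hA0
    · exact h
  have hAeq : A = (ℓ:ℤ)^s * (A / (ℓ:ℤ)^s) := by
    rw [mul_comm]; exact (Int.ediv_mul_cancel hs_dvd).symm
  have hu : ¬ (ℓ:ℤ) ∣ (A / (ℓ:ℤ)^s) := by
    intro h
    obtain ⟨v, hv⟩ := h
    exact hs_not ⟨v, by rw [hAeq, hv, pow_succ]; ring⟩
  have he1 : 1 ≤ e := by
    have h1 : ℓ ∣ 4*n*f^2 := hdvd.trans ⟨4*f, by ring⟩
    have h2 : 4*n*f^2 ≠ 0 := by positivity
    exact (Nat.Prime.factorization_pos_of_dvd hℓ h2 h1)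
  have hcnt := Cpl_eq_cnt p a f n ℓ hℓ he1 hd
  have hj0 : ℓ ∣ (p+1) → jacobiSym ((p:ℤ)+1) ℓ = 0 := by
    intro hpm
    rw [jacobiSym.eq_zero_iff]
    refine ⟨hℓ.ne_zero, ?_⟩
    have hcast : ((p:ℤ)+1) = ((p+1:ℕ):ℤ) := by push_cast; ring
    rw [hcast, Int.gcd_natCast_natCast]
    intro h1
    have h2 : ℓ ∣ 1 := h1 ▸ Nat.dvd_gcd hpm dvd_rfl
    exact Nat.Prime.one_lt hℓ |>.ne' (Nat.dvd_one.mp h2)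
  have hj1 : ¬ ℓ ∣ (p+1) → (jacobiSym ((p:ℤ)+1) ℓ)^2 = 1 := by
    intro hpm
    have hg : Int.gcd ((p:ℤ)+1) ℓ = 1 := by
      have hcast : ((p:ℤ)+1) = ((p+1:ℕ):ℤ) := by push_cast; ring
      rw [hcast, Int.gcd_natCast_natCast]
      exact ((Nat.Prime.coprime_iff_not_dvd hℓ).2 hpm).symm
    rcases jacobiSym.eq_one_or_neg_one hg with h | h <;> rw [h] <;> ring
  refine ⟨?_, ?_, ?_⟩
  · rintro ⟨h1s, hslt, hsev, hjac⟩
    by_cases hpm : ℓ ∣ (p+1)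
    · rw [hcnt, if_pos hpm, hj0 hpm]
      push_cast; ring
    · rw [hcnt, if_neg hpm]
      have h2 : cnt ℓ e A = cnt ℓ e ((ℓ:ℤ)^s * (A / (ℓ:ℤ)^s)) := by rw [← hAeq]
      rw [h2, cnt_even_case ℓ hℓ hℓ2 hslt hsev hu, if_pos hjac, hj1 hpm]
      push_cast; ring
  · intro hle
    by_cases hpm : ℓ ∣ (p+1)
    · rw [hcnt, if_pos hpm, hj0 hpm]
      push_cast; ring
    · rw [hcnt, if_neg hpm]
      have h2 : (ℓ:ℤ)^e ∣ A := (pow_dvd_pow _ hle).trans hs_dvd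
      rw [cnt_of_dvd ℓ hℓ e h2, hj1 hpm]
      push_cast; ring
  · rintro ⟨hnot1, hnot2⟩
    have hslt : s < e := by omega
    by_cases hpm : ℓ ∣ (p+1)
    · rw [hcnt, if_pos hpm]
    · rw [hcnt, if_neg hpm]
      by_cases hsev : Even s
      · have hjac : ¬ jacobiSym (A / (ℓ:ℤ)^s) ℓ = 1 := by
          intro hj
          exact hnot1 ⟨hs1, hslt, hsev, hj⟩
        have h2 : cnt ℓ e A = cnt ℓ e ((ℓ:ℤ)^s * (A / (ℓ:ℤ)^s)) := by rw [← hAeq]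
        rw [h2, cnt_even_case ℓ hℓ hℓ2 hslt hsev hu, if_neg hjac, mul_zero]
      · exact cnt_odd_case ℓ hℓ hslt hsev hs_dvd hs_not

end
end

section
/- Let p be an odd prime, f an odd positive integer, n a positive integer, and a an integer with a ≡ 1 (mod 4). Let ℓ be a prime dividing f. Then C_p^{(ℓ)}(a,f,n) = C_p^{(ℓ)}(1,f,1), and this common value equals 1 + ((p(p−1)²)/ℓ) if ℓ ≠ p, and equals 0 if ℓ = p, where (·/ℓ) denotes the Legendre symbol. -/
/-!
Put `x = p + 1 - m`: then `D(p, m) ≡ a f² (mod ℓ^e)` reads `x² ≡ 4p + a f²`, and `m` is a unit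
exactly when `x ≢ p + 1 (mod ℓ)`.

If `ℓ = p`, then `e ≥ 2`; a solution would give `p ∣ x`, hence `p² ∣ 4p`, which is impossible for
odd `p`. If `ℓ ≠ p`, then `ℓ` is odd (it divides `f`) and `4p + a f² ≡ 4p` is a unit modulo `ℓ`, so
by Hensel's lemma reduction modulo `ℓ` is a bijection between the square roots of `4p + a f²`
modulo `ℓ^e` and those of `4p` modulo `ℓ`. Among the `1 + (p/ℓ)` square roots of `4p` modulo `ℓ`,
`p + 1` occurs only when `p ≡ 1`, because `(p + 1)² - 4p = (p - 1)²`; in either case the count is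
`1 + (p(p - 1)²/ℓ)`, whatever `a` and `n` are.
-/

open scoped Classical

noncomputable section

open Finset

theorem exists_sq_sub_dvd_pow_succ {R : Type*} [CommRing R] {ℓ x c : R}
    (hx : IsCoprime (2 * x) ℓ) (hxc : ℓ ∣ x ^ 2 - c) (e : ℕ) :
    ∃ y, ℓ ∣ y - x ∧ ℓ ^ (e + 1) ∣ y ^ 2 - c := by
  induction e with
  | zero => exact ⟨x, by simp, by simpa using hxc⟩
  | succ e ih =>
    obtain ⟨y, ⟨t, ht⟩, k, hk⟩ := ih
    have hy : IsCoprime (2 * y) ℓ := by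
      convert hx.add_mul_left_left (2 * t) using 1
      linear_combination 2 * ht
    -- Newton step: `u` inverts `2 * y` modulo `ℓ`.
    obtain ⟨u, v, huv⟩ := hy
    refine ⟨y - k * u * ℓ ^ (e + 1), ⟨t - k * u * ℓ ^ e, by linear_combination ht⟩,
      k * v + k ^ 2 * u ^ 2 * ℓ ^ e, ?_⟩
    linear_combination hk - k * ℓ ^ (e + 1) * huv

theorem Prime.dvd_two_of_sq_dvd_sq_sub_four_mul {R : Type*} [CommRing R] [IsDomain R] {p x : R}
    (hp : Prime p) (h : p ^ 2 ∣ x ^ 2 - 4 * p) : p ∣ 2 := by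
  have hx : p ∣ x := hp.dvd_of_dvd_pow (n := 2) <|
    (dvd_sub_left (dvd_mul_left p 4)).mp ((dvd_pow_self p two_ne_zero).trans h)
  have h4 : p * p ∣ p * 4 := by
    rw [← sq, mul_comm]
    exact (dvd_sub_right (pow_dvd_pow_of_dvd hx 2)).mp h
  have h4' : p ∣ 2 ^ 2 := by
    norm_num
    exact (mul_dvd_mul_iff_left hp.ne_zero).mp h4
  exact hp.dvd_of_dvd_pow h4'

namespace ZMod

variable {ℓ : ℕ} [Fact ℓ.Prime] {e : ℕ}

theorem two_ne_zero_of_ne_two_s9 (hℓ2 : ℓ ≠ 2) : (2 : ZMod ℓ) ≠ 0 := by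
  rw [← Nat.cast_ofNat, Ne, natCast_eq_zero_iff]
  exact fun h => hℓ2 ((Nat.prime_dvd_prime_iff_eq Fact.out Nat.prime_two).mp h)

theorem isUnit_iff_castHom_ne_zero_s9 (he : e ≠ 0) (z : ZMod (ℓ ^ e)) :
    IsUnit z ↔ castHom (dvd_pow_self ℓ he) (ZMod ℓ) z ≠ 0 := by
  obtain ⟨k, rfl⟩ := intCast_surjective z
  rw [map_intCast, coe_int_isUnit_iff_isCoprime, Nat.cast_pow,
    IsCoprime.pow_left_iff (Nat.pos_of_ne_zero he),
    (Nat.prime_iff_prime_int.mp Fact.out).coprime_iff_not_dvd, Ne,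
    intCast_zmod_eq_zero_iff_dvd]

theorem exists_sq_eq_castHom_eq_s9 (he : e ≠ 0) (hℓ2 : ℓ ≠ 2) {c : ℤ} (hc : (c : ZMod ℓ) ≠ 0)
    {x₀ : ZMod ℓ} (hx₀ : x₀ ^ 2 = c) :
    ∃ x : ZMod (ℓ ^ e), x ^ 2 = c ∧ castHom (dvd_pow_self ℓ he) (ZMod ℓ) x = x₀ := by
  obtain ⟨X, rfl⟩ := intCast_surjective x₀
  have hX : (X : ZMod ℓ) ≠ 0 := fun h => hc (by rw [← hx₀, h, zero_pow two_ne_zero])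
  have hcop : IsCoprime (2 * X) (ℓ : ℤ) := by
    rw [isCoprime_comm, ← coe_int_isUnit_iff_isCoprime, Int.cast_mul, Int.cast_ofNat]
    exact (isUnit_iff_ne_zero.mpr (two_ne_zero_of_ne_two_s9 hℓ2)).mul (isUnit_iff_ne_zero.mpr hX)
  obtain ⟨y, hyX, hyc⟩ := exists_sq_sub_dvd_pow_succ hcop
    ((intCast_eq_intCast_iff_dvd_sub _ _ _).mp (by push_cast; exact hx₀.symm)) (e - 1)
  rw [Nat.sub_add_cancel (Nat.pos_of_ne_zero he)] at hyc
  refine ⟨y, ?_, ?_⟩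
  · rw [← Int.cast_pow, intCast_eq_intCast_iff_dvd_sub, Nat.cast_pow]
    exact dvd_sub_comm.mp hyc
  · rw [map_intCast, intCast_eq_intCast_iff_dvd_sub]
    exact dvd_sub_comm.mp hyX

theorem eq_of_sq_eq_of_castHom_eq_s9 (he : e ≠ 0) (hℓ2 : ℓ ≠ 2) {x y : ZMod (ℓ ^ e)}
    (hxy : x ^ 2 = y ^ 2)
    (hπ : castHom (dvd_pow_self ℓ he) (ZMod ℓ) x = castHom (dvd_pow_self ℓ he) (ZMod ℓ) y)
    (hx : castHom (dvd_pow_self ℓ he) (ZMod ℓ) x ≠ 0) : x = y := by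
  have hsum : IsUnit (x + y) := by
    rw [isUnit_iff_castHom_ne_zero_s9 he, map_add, ← hπ, ← two_mul]
    exact mul_ne_zero (two_ne_zero_of_ne_two_s9 hℓ2) hx
  rw [← sub_eq_zero, ← hsum.mul_left_eq_zero]
  linear_combination hxy

theorem card_sq_eq_filter_castHom (he : e ≠ 0) (hℓ2 : ℓ ≠ 2) {c : ℤ} (hc : (c : ZMod ℓ) ≠ 0)
    (S : ZMod ℓ → Prop) [DecidablePred S] :
    #{x : ZMod (ℓ ^ e) | x ^ 2 = c ∧ S (castHom (dvd_pow_self ℓ he) (ZMod ℓ) x)} =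
      #{x : ZMod ℓ | x ^ 2 = c ∧ S x} := by
  have : NeZero (ℓ ^ e) := ⟨pow_ne_zero e (Fact.out : ℓ.Prime).ne_zero⟩
  set π := castHom (dvd_pow_self ℓ he) (ZMod ℓ)
  apply card_bij (fun x _ => π x)
  · simp only [mem_filter, mem_univ, true_and]
    rintro x ⟨hx, hS⟩
    exact ⟨by rw [← map_pow, hx, map_intCast], hS⟩
  · simp only [mem_filter, mem_univ, true_and]
    rintro x ⟨hx, -⟩ y ⟨hy, -⟩ hπ
    refine eq_of_sq_eq_of_castHom_eq_s9 he hℓ2 (hx.trans hy.symm) hπ fun h => hc ?_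
    rw [← map_intCast π, ← hx, map_pow, h, zero_pow two_ne_zero]
  · simp only [mem_filter, mem_univ, true_and]
    rintro x₀ ⟨hx₀, hS⟩
    obtain ⟨x, hx, rfl⟩ := exists_sq_eq_castHom_eq_s9 he hℓ2 hc hx₀
    exact ⟨x, ⟨hx, hS⟩, rfl⟩

end ZMod

theorem card_sq_eq_four_mul_sub_ne_zero {ℓ : ℕ} [Fact ℓ.Prime] (hℓ2 : ℓ ≠ 2) (r : ℤ) :
    (#{x : ZMod ℓ | x ^ 2 = ((4 * r : ℤ) : ZMod ℓ) ∧ ((r + 1 : ℤ) : ZMod ℓ) - x ≠ 0} : ℤ) =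
      1 + legendreSym ℓ (r * (r - 1) ^ 2) := by
  have h2 := ZMod.two_ne_zero_of_ne_two_s9 hℓ2
  by_cases hr : (r : ZMod ℓ) = 1
  · have hroots : ∀ x : ZMod ℓ,
        x ^ 2 = ((4 * r : ℤ) : ZMod ℓ) ∧ ((r + 1 : ℤ) : ZMod ℓ) - x ≠ 0 ↔ x = -2 := by
      intro x
      push_cast
      rw [hr, one_add_one_eq_two]
      constructor
      · rintro ⟨hsq, hne⟩
        have : (x + 2) * (2 - x) = 0 := by linear_combination -hsq
        exact eq_neg_of_add_eq_zero_left ((mul_eq_zero_iff_right hne).mp this)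
      · rintro rfl
        refine ⟨by ring, ?_⟩
        rw [show (2 : ZMod ℓ) - -2 = 2 * 2 by ring]
        exact mul_ne_zero h2 h2
    rw [filter_congr fun x _ => hroots x, filter_eq' univ, if_pos (mem_univ _),
      card_singleton, (legendreSym.eq_zero_iff ℓ _).mpr (by push_cast; rw [hr]; ring)]
    norm_num
  · have hne : ∀ x : ZMod ℓ, x ^ 2 = ((4 * r : ℤ) : ZMod ℓ) → ((r + 1 : ℤ) : ZMod ℓ) - x ≠ 0 := by
      intro x hx h0
      apply hr
      have : ((r : ZMod ℓ) - 1) ^ 2 = 0 := by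
        push_cast at hx h0
        linear_combination ((r : ZMod ℓ) + 1 + x) * h0 + hx
      exact sub_eq_zero.mp (pow_eq_zero_iff two_ne_zero |>.mp this)
    rw [filter_congr fun x _ => and_iff_left_of_imp (hne x)]
    have hsqrts := legendreSym.card_sqrts ℓ hℓ2 (4 * r)
    rw [Set.toFinset_ofPred] at hsqrts
    have h4 : legendreSym ℓ (4 * r) = legendreSym ℓ r := by
      rw [show 4 * r = 2 ^ 2 * r by ring, legendreSym.mul,
        legendreSym.sq_one' ℓ (a := 2) (by exact_mod_cast h2), one_mul]
    have hsq : legendreSym ℓ (r * (r - 1) ^ 2) = legendreSym ℓ r := by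
      rw [legendreSym.mul,
        legendreSym.sq_one' ℓ (a := r - 1) (by push_cast; exact sub_ne_zero.mpr hr), mul_one]
    rw [hsqrts, h4, hsq, add_comm]

theorem card_range_filter_coprime {N : ℕ} [NeZero N] (S : ZMod N → Prop) [DecidablePred S] :
    #{m ∈ range N | Nat.Coprime m N ∧ S (m : ZMod N)} = #{u : ZMod N | IsUnit u ∧ S u} := by
  apply card_nbij' (fun m : ℕ => (m : ZMod N)) ZMod.val
  · intro m hm
    simp only [mem_coe, mem_filter, mem_range, mem_univ, true_and] at hm ⊢
    exact ⟨(ZMod.isUnit_iff_coprime m N).mpr hm.2.1, hm.2.2⟩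
  · intro u hu
    simp only [mem_coe, mem_filter, mem_range, mem_univ, true_and] at hu ⊢
    refine ⟨u.val_lt, ?_, by rw [ZMod.natCast_zmod_val]; exact hu.2⟩
    rw [← ZMod.isUnit_iff_coprime, ZMod.natCast_zmod_val]
    exact hu.1
  · intro m hm
    simp only [mem_coe, mem_filter, mem_range] at hm
    exact ZMod.val_cast_of_lt hm.1
  · intro u _
    exact ZMod.natCast_zmod_val u

theorem card_range_coprime_dvd_Dfun_sub {N : ℕ} [NeZero N] (P d : ℤ) :
    #{m ∈ range N | Nat.Coprime m N ∧ (N : ℤ) ∣ Dfun P (m : ℕ) - d} =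
      #{x : ZMod N | x ^ 2 = ((4 * P + d : ℤ) : ZMod N) ∧ IsUnit (((P + 1 : ℤ) : ZMod N) - x)} := by
  have hD : ∀ m : ℤ, (N : ℤ) ∣ Dfun P m - d ↔
      (((P + 1 : ℤ) : ZMod N) - m) ^ 2 = ((4 * P + d : ℤ) : ZMod N) := by
    intro m
    rw [← ZMod.intCast_zmod_eq_zero_iff_dvd, ← sub_eq_zero (a := (((P + 1 : ℤ) : ZMod N) - m) ^ 2)]
    push_cast [Dfun]
    ring_nf
  set S : ZMod N → Prop := fun u => (((P + 1 : ℤ) : ZMod N) - u) ^ 2 = ((4 * P + d : ℤ) : ZMod N)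
  calc _ = #{m ∈ range N | Nat.Coprime m N ∧ S ((m : ℕ) : ZMod N)} := by
        congr 1
        refine filter_congr fun m _ => ?_
        rw [hD, Int.cast_natCast]
    _ = #{u : ZMod N | IsUnit u ∧ S u} := card_range_filter_coprime S
    _ = _ := card_equiv (Equiv.subLeft ((P + 1 : ℤ) : ZMod N)) fun u => by
        simp only [S, mem_filter, mem_univ, true_and, Equiv.subLeft_apply, sub_sub_cancel, and_comm]

theorem Cpl_self_eq_zero {p f n : ℕ} (a : ℤ) (hp : p.Prime) (hp2 : p ≠ 2) (hpf : p ∣ f) (hf : f ≠ 0)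
    (hn : n ≠ 0) : Cpl p a f n p = 0 := by
  have he : 2 ≤ (4 * n * f ^ 2).factorization p := by
    rw [← hp.pow_dvd_iff_le_factorization (by positivity)]
    exact (pow_dvd_pow_of_dvd hpf 2).mul_left _
  rw [Cpl, card_eq_zero, filter_eq_empty_iff]
  rintro m - ⟨-, hm⟩
  have hsq : (p : ℤ) ^ 2 ∣ ((p : ℤ) + 1 - m) ^ 2 - 4 * p := by
    have hf2 : (p : ℤ) ^ 2 ∣ a * (f : ℤ) ^ 2 :=
      (pow_dvd_pow_of_dvd (Int.natCast_dvd_natCast.mpr hpf) 2).mul_left a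
    have := dvd_add ((pow_dvd_pow (p : ℤ) he).trans hm) hf2
    rwa [sub_add_cancel, Dfun] at this
  have hp2' : (p : ℤ) ∣ 2 := (Nat.prime_iff_prime_int.mp hp).dvd_two_of_sq_dvd_sq_sub_four_mul hsq
  exact hp2 ((Nat.prime_dvd_prime_iff_eq hp Nat.prime_two).mp (Int.natCast_dvd_natCast.mp hp2'))

theorem Cpl_eq_one_add_jacobiSym {p f n ℓ : ℕ} [Fact ℓ.Prime] (a : ℤ) (hℓ2 : ℓ ≠ 2) (hℓp : ¬ℓ ∣ p)
    (hℓf : ℓ ∣ f) (hf : f ≠ 0) (hn : n ≠ 0) :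
    (Cpl p a f n ℓ : ℤ) = 1 + jacobiSym (p * (p - 1) ^ 2) ℓ := by
  set e := (4 * n * f ^ 2).factorization ℓ
  have he : e ≠ 0 := (Nat.Prime.factorization_pos_of_dvd Fact.out (by positivity)
    (hℓf.trans ((dvd_pow_self f two_ne_zero).mul_left _))).ne'
  have : NeZero (ℓ ^ e) := ⟨pow_ne_zero _ (Fact.out : ℓ.Prime).ne_zero⟩
  set π := ZMod.castHom (dvd_pow_self ℓ he) (ZMod ℓ)
  set S : ZMod ℓ → Prop := fun y => (((p : ℤ) + 1 : ℤ) : ZMod ℓ) - y ≠ 0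
  have hc : ((4 * p + a * f ^ 2 : ℤ) : ZMod ℓ) = ((4 * p : ℤ) : ZMod ℓ) := by
    push_cast [(ZMod.natCast_eq_zero_iff f ℓ).mpr hℓf]
    ring
  have hc0 : ((4 * p : ℤ) : ZMod ℓ) ≠ 0 := by
    push_cast
    refine mul_ne_zero ?_ (by rwa [Ne, ZMod.natCast_eq_zero_iff])
    rw [show (4 : ZMod ℓ) = 2 * 2 by norm_num]
    exact mul_ne_zero (ZMod.two_ne_zero_of_ne_two_s9 hℓ2) (ZMod.two_ne_zero_of_ne_two_s9 hℓ2)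
  rw [Cpl, ← Nat.cast_pow, card_range_coprime_dvd_Dfun_sub]
  calc
    _ = (#{x : ZMod (ℓ ^ e) | x ^ 2 = ((4 * p + a * f ^ 2 : ℤ) : ZMod (ℓ ^ e)) ∧ S (π x)} : ℤ) := by
      congr 2
      refine filter_congr fun x _ => ?_
      rw [ZMod.isUnit_iff_castHom_ne_zero_s9 he, map_sub, map_intCast]
    _ = #{x : ZMod ℓ | x ^ 2 = ((4 * p : ℤ) : ZMod ℓ) ∧ S x} := by
      rw [ZMod.card_sq_eq_filter_castHom he hℓ2 (hc ▸ hc0) S, hc]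
    _ = 1 + legendreSym ℓ (p * (p - 1) ^ 2) := card_sq_eq_four_mul_sub_ne_zero hℓ2 p
    _ = 1 + jacobiSym (p * (p - 1) ^ 2) ℓ := by rw [jacobiSym.legendreSym.to_jacobiSym]

theorem Cpl_of_dvd_f_general (p : ℕ) (hp : p.Prime)
    (f : ℕ) (hf : Odd f) (n : ℕ) (hn : 0 < n)
    (a : ℤ)
    (ℓ : ℕ) (hℓ : ℓ.Prime) (hdvd : ℓ ∣ f) :
    Cpl p a f n ℓ = Cpl p 1 f 1 ℓ ∧
    (ℓ ≠ p → (Cpl p 1 f 1 ℓ : ℤ) = 1 + jacobiSym ((p : ℤ) * ((p : ℤ) - 1) ^ 2) ℓ) ∧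
    (ℓ = p → Cpl p 1 f 1 ℓ = 0) := by
  have : Fact ℓ.Prime := ⟨hℓ⟩
  have hℓ2 : ℓ ≠ 2 := hf.ne_two_of_dvd_nat hdvd
  rcases eq_or_ne ℓ p with rfl | hℓp
  · have hzero : ∀ a n, n ≠ 0 → Cpl ℓ a f n ℓ = 0 := fun a n hn =>
      Cpl_self_eq_zero a hℓ hℓ2 hdvd hf.pos.ne' hn
    exact ⟨by rw [hzero a n hn.ne', hzero 1 1 one_ne_zero], fun h => (h rfl).elim,
      fun _ => hzero 1 1 one_ne_zero⟩
  · have hcount : ∀ a n, n ≠ 0 → (Cpl p a f n ℓ : ℤ) = 1 + jacobiSym (p * (p - 1) ^ 2) ℓ :=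
      fun a n hn => Cpl_eq_one_add_jacobiSym a hℓ2
        (fun h => hℓp ((Nat.prime_dvd_prime_iff_eq hℓ hp).mp h)) hdvd hf.pos.ne' hn
    exact ⟨by exact_mod_cast (hcount a n hn.ne').trans (hcount 1 1 one_ne_zero).symm,
      fun _ => hcount 1 1 one_ne_zero, fun h => (hℓp h).elim⟩

/-- Lemma 4.2 (David–Smith), third case: for a prime `ℓ` dividing `f`,
`C_p^{(ℓ)}(a,f,n) = C_p^{(ℓ)}(1,f,1)`, which equals `1 + (p(p-1)²/ℓ)` if `ℓ ≠ p`
and `0` if `ℓ = p`. -/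
theorem Cpl_of_dvd_f (p : ℕ) (hp : p.Prime) (hp2 : p ≠ 2)
    (f : ℕ) (hf : Odd f) (hf0 : 0 < f) (n : ℕ) (hn : 0 < n)
    (a : ℤ) (ha : a % 4 = 1)
    (ℓ : ℕ) (hℓ : ℓ.Prime) (hdvd : ℓ ∣ f) :
    Cpl p a f n ℓ = Cpl p 1 f 1 ℓ ∧
    (ℓ ≠ p → (Cpl p 1 f 1 ℓ : ℤ) = 1 + jacobiSym ((p : ℤ) * ((p : ℤ) - 1) ^ 2) ℓ) ∧
    (ℓ = p → Cpl p 1 f 1 ℓ = 0) :=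
  Cpl_of_dvd_f_general p hp f hf n hn a ℓ hℓ hdvd
end
end

section
/- Let p be an odd prime and f₁, f₂ odd positive integers. The function C_{p,f}(n₁,n₂) is multiplicative in the two variables n₁, n₂: if n₁ = n₁'·n₁'' and n₂ = n₂'·n₂'' with gcd(n₁'n₂', n₁''n₂'') = 1, then C_{p,f}(n₁,n₂) = C_{p,f}(n₁',n₂')·C_{p,f}(n₁'',n₂''), and C_{p,f}(1,1) = 1. -/
open scoped Classical

noncomputable section

/-- The Kronecker symbol at the prime `2`: `0` for even `a`, `1` for `a ≡ ±1 (mod 8)`,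
`-1` for `a ≡ ±3 (mod 8)`. -/
def kron2 (a : ℤ) : ℤ := if 2 ∣ a then 0 else if a % 8 = 1 ∨ a % 8 = 7 then 1 else -1

/-- The Kronecker symbol `(a/n)`: completely multiplicative in `n`, equal to the Legendre
symbol at odd primes and to `kron2` at `2`, with `(a/1) = 1`. -/
def kron (a : ℤ) (n : ℕ) : ℤ :=
  (kron2 a) ^ (n.factorization 2) * jacobiSym a (n / 2 ^ (n.factorization 2))

/-- `S^{(2)}(a,n)`: `1` if `n` is odd, `2` if `n` is even and `a ≡ 5 (mod 8)`,
`0` otherwise. -/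
def S2fun (a n : ℕ) : ℤ := if ¬ (2 ∣ n) then 1 else if a % 8 = 5 then 2 else 0

/-- The triple `(a,f,n)` at the prime `ℓ`: `(a₁,f₁,n₁)` if `ν_ℓ(4n₁f₁²) ≥ ν_ℓ(4n₂f₂²)`
and `(a₂,f₂,n₂)` otherwise. -/
def sel (f₁ f₂ n₁ n₂ a₁ a₂ ℓ : ℕ) : ℕ × ℕ × ℕ :=
  if (4 * n₂ * f₂ ^ 2).factorization ℓ ≤ (4 * n₁ * f₁ ^ 2).factorization ℓ then (a₁, f₁, n₁)
  else (a₂, f₂, n₂)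

/-- `C_{p,f}(n₁,n₂)`: the sum over `a₁ ∈ (ℤ/4n₁ℤ)ˣ`, `a₂ ∈ (ℤ/4n₂ℤ)ˣ` with
`a₁ ≡ a₂ ≡ 1 (mod 4)` and `a₁f₁² ≡ a₂f₂² (mod gcd(4n₁f₁²,4n₂f₂²))` of
`(a₁/n₁)(a₂/n₂) S^{(2)}(a,n) ∏_{ℓ ∣ n₁n₂ odd} C_p^{(ℓ)}(a,f,n)`. -/
def Cpf (p f₁ f₂ n₁ n₂ : ℕ) : ℤ :=
  ∑ a₁ ∈ Finset.range (4 * n₁), ∑ a₂ ∈ Finset.range (4 * n₂),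
    if Nat.Coprime a₁ (4 * n₁) ∧ Nat.Coprime a₂ (4 * n₂) ∧ a₁ % 4 = 1 ∧ a₂ % 4 = 1 ∧
        (a₁ * f₁ ^ 2) % (Nat.gcd (4 * n₁ * f₁ ^ 2) (4 * n₂ * f₂ ^ 2)) =
          (a₂ * f₂ ^ 2) % (Nat.gcd (4 * n₁ * f₁ ^ 2) (4 * n₂ * f₂ ^ 2)) then
      kron (a₁ : ℤ) n₁ * kron (a₂ : ℤ) n₂ *
      S2fun (sel f₁ f₂ n₁ n₂ a₁ a₂ 2).1 (sel f₁ f₂ n₁ n₂ a₁ a₂ 2).2.2 *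
      ∏ ℓ ∈ ((n₁ * n₂).primeFactors.erase 2),
        ((Cpl p ((sel f₁ f₂ n₁ n₂ a₁ a₂ ℓ).1 : ℤ) (sel f₁ f₂ n₁ n₂ a₁ a₂ ℓ).2.1
            (sel f₁ f₂ n₁ n₂ a₁ a₂ ℓ).2.2 ℓ : ℤ))
    else 0

/-!
The summand of `Cpf` vanishes unless `a₁ ≡ a₂ ≡ 1 (mod 4)`, and otherwise depends only on `a₁`
mod `4 n₁` and `a₂` mod `4 n₂`. Writing `aᵢ = 1 + 4 bᵢ`, the Chinese remainder theorem identifies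
`bᵢ` mod `nᵢ' nᵢ''` with a pair of residues mod `nᵢ'` and mod `nᵢ''`, and under this identification
the summand factors. The Kronecker symbols are multiplicative in the modulus; the congruence modulo
`gcd(4 n₁ f₁², 4 n₂ f₂²)` splits because this gcd is the lcm of the two partial gcds; and a prime `ℓ`
divides at most one of `n₁' n₂'` and `n₁'' n₂''`, so the triple chosen by `sel` at `ℓ`, and with it
the local factor at `ℓ`, only sees that part.
-/

theorem Nat.modEq_and_modEq_iff_modEq_lcm {a b m n : ℕ} :
    a ≡ b [MOD m] ∧ a ≡ b [MOD n] ↔ a ≡ b [MOD m.lcm n] := by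
  simp only [← Int.natCast_modEq_iff, Int.modEq_and_modEq_iff_modEq_lcm]
  rfl

theorem Nat.ModEq.coprime_iff {a b n : ℕ} (h : a ≡ b [MOD n]) :
    Nat.Coprime a n ↔ Nat.Coprime b n := by
  rw [Nat.Coprime, Nat.Coprime, h.gcd_eq]

theorem Nat.coprime_four_mul_mul_iff {a n m : ℕ} :
    Nat.Coprime a (4 * (n * m)) ↔ Nat.Coprime a (4 * n) ∧ Nat.Coprime a (4 * m) := by
  simp only [Nat.coprime_mul_iff_right]
  tauto

theorem Nat.factorization_mul_apply_of_not_dvd {ℓ m : ℕ} (k : ℕ) (h : ¬ ℓ ∣ m) :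
    (k * m).factorization ℓ = k.factorization ℓ := by
  rcases eq_or_ne k 0 with rfl | hk
  · simp
  rw [Nat.factorization_mul hk (by rintro rfl; exact h (dvd_zero ℓ)), Finsupp.add_apply,
    Nat.factorization_eq_zero_of_not_dvd h, add_zero]

theorem Nat.gcd_mul_mul_eq_lcm_gcd {c d x' x'' y' y'' : ℕ}
    (hco : Nat.Coprime (x' * y') (x'' * y'')) :
    Nat.gcd (c * (x' * x'')) (d * (y' * y'')) =
      Nat.lcm (Nat.gcd (c * x') (d * y')) (Nat.gcd (c * x'') (d * y'')) := by
  refine Nat.dvd_antisymm ?_ (Nat.lcm_dvd ?_ ?_)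
  · refine (Nat.dvd_iff_prime_pow_dvd_dvd _ _).2 fun q k hq hqk => ?_
    have hx : q ^ k ∣ c * (x' * x'') := hqk.trans (Nat.gcd_dvd_left _ _)
    have hy : q ^ k ∣ d * (y' * y'') := hqk.trans (Nat.gcd_dvd_right _ _)
    have cancel {e u v : ℕ} (hu : ¬ q ∣ u) (h : q ^ k ∣ e * (u * v)) : q ^ k ∣ e * v :=
      (Nat.Coprime.pow_left k ((Nat.Prime.coprime_iff_not_dvd hq).2 hu)).dvd_of_dvd_mul_left
        (by rwa [mul_left_comm] at h)
    by_cases hq' : q ∣ x' * y'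
    · have hq'' : ¬ q ∣ x'' * y'' := fun h => hq.ne_one (Nat.eq_one_of_dvd_coprimes hco hq' h)
      rw [mul_comm x'] at hx
      rw [mul_comm y'] at hy
      exact (Nat.dvd_gcd (cancel (fun h => hq'' (h.mul_right _)) hx)
        (cancel (fun h => hq'' (h.mul_left _)) hy)).trans (Nat.dvd_lcm_left _ _)
    · exact (Nat.dvd_gcd (cancel (fun h => hq' (h.mul_right _)) hx)
        (cancel (fun h => hq' (h.mul_left _)) hy)).trans (Nat.dvd_lcm_right _ _)
  · exact Nat.dvd_gcd ((Nat.gcd_dvd_left _ _).trans (mul_dvd_mul_left _ (dvd_mul_right _ _)))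
      ((Nat.gcd_dvd_right _ _).trans (mul_dvd_mul_left _ (dvd_mul_right _ _)))
  · exact Nat.dvd_gcd ((Nat.gcd_dvd_left _ _).trans (mul_dvd_mul_left _ (dvd_mul_left _ _)))
      ((Nat.gcd_dvd_right _ _).trans (mul_dvd_mul_left _ (dvd_mul_left _ _)))

theorem factorization_four_mul_mul_sq_of_not_dvd {ℓ m : ℕ} (n f : ℕ) (h : ¬ ℓ ∣ m) :
    (4 * (n * m) * f ^ 2).factorization ℓ = (4 * n * f ^ 2).factorization ℓ := by
  rw [show 4 * (n * m) * f ^ 2 = 4 * n * f ^ 2 * m by ring,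
    Nat.factorization_mul_apply_of_not_dvd _ h]

theorem sq_modEq_sq_of_odd {f₁ f₂ : ℕ} (hf₁ : Odd f₁) (hf₂ : Odd f₂) :
    f₁ ^ 2 ≡ f₂ ^ 2 [MOD Nat.gcd (4 * f₁ ^ 2) (4 * f₂ ^ 2)] := by
  have hsq {f : ℕ} (hf : Odd f) : f ^ 2 % 4 = 1 := by
    obtain ⟨k, rfl⟩ := hf
    rw [show (2 * k + 1) ^ 2 = 4 * (k * k + k) + 1 by ring]
    omega
  have hcop : Nat.Coprime 4 (Nat.gcd (f₁ ^ 2) (f₂ ^ 2)) :=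
    (Nat.Coprime.pow_left 2 (Nat.coprime_two_left.2 hf₁.pow)).coprime_dvd_right
      (Nat.gcd_dvd_left _ _)
  rw [Nat.gcd_mul_left, ← Nat.modEq_and_modEq_iff_modEq_mul hcop]
  exact ⟨(hsq hf₁).trans (hsq hf₂).symm,
    ((Nat.modEq_zero_iff_dvd.2 (Nat.gcd_dvd_left _ _)).trans
      (Nat.modEq_zero_iff_dvd.2 (Nat.gcd_dvd_right _ _)).symm)⟩

theorem Finset.sum_range_mul_eq_sum_add_mul {M : Type*} [AddCommMonoid M] {k r : ℕ} (hr : r < k)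
    (n : ℕ) (F : ℕ → M) (hF : ∀ a, a % k ≠ r → F a = 0) :
    ∑ a ∈ range (k * n), F a = ∑ b ∈ range n, F (r + k * b) := by
  rw [← Finset.sum_image (g := fun b => r + k * b) fun x _ y _ h => by
    simpa [(Nat.zero_le r).trans_lt hr |>.ne'] using h]
  refine (Finset.sum_subset (fun a ha => ?_) fun a ha hna => hF a fun h => hna ?_).symm
  · obtain ⟨b, hb, rfl⟩ := Finset.mem_image.1 ha
    simp only [Finset.mem_range] at hb ⊢
    nlinarith
  · simp only [Finset.mem_range, Finset.mem_image] at ha ⊢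
    refine ⟨a / k, Nat.div_lt_of_lt_mul ha, ?_⟩
    rw [← h]
    exact Nat.mod_add_div a k

theorem Finset.sum_range_mul_eq_sum_sum_mod {M : Type*} [AddCommMonoid M] {m n : ℕ}
    (h : Nat.Coprime m n) (F : ℕ → ℕ → M) :
    ∑ b ∈ range (m * n), F (b % m) (b % n) = ∑ x ∈ range m, ∑ y ∈ range n, F x y := by
  rcases Nat.eq_zero_or_pos m with rfl | hm
  · simp
  rcases Nat.eq_zero_or_pos n with rfl | hn
  · simp
  rw [← Finset.sum_product']
  refine Finset.sum_nbij' (fun b => (b % m, b % n))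
    (fun p => (Nat.chineseRemainder h p.1 p.2 : ℕ)) (fun b _ => ?_) (fun p _ => ?_) (fun b hb => ?_)
    (fun p hp => ?_) (fun _ _ => rfl)
  · simp [Nat.mod_lt _ hm, Nat.mod_lt _ hn]
  · simpa using Nat.chineseRemainder_lt_mul h _ _ hm.ne' hn.ne'
  · have hcrt := (Nat.chineseRemainder h (b % m) (b % n)).2
    refine Nat.ModEq.eq_of_lt_of_lt ((Nat.modEq_and_modEq_iff_modEq_mul h).1
      ⟨hcrt.1.trans (Nat.mod_modEq b m), hcrt.2.trans (Nat.mod_modEq b n)⟩)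
      (Nat.chineseRemainder_lt_mul h _ _ hm.ne' hn.ne') (Finset.mem_range.1 hb)
  · have hcrt := (Nat.chineseRemainder h p.1 p.2).2
    simp only [Finset.mem_product, Finset.mem_range] at hp
    simp only [Nat.ModEq] at hcrt
    ext <;> simp [hcrt.1, hcrt.2, Nat.mod_eq_of_lt hp.1, Nat.mod_eq_of_lt hp.2]

theorem Finset.sum_sum_range_mul_eq_mul {R : Type*} [CommSemiring R] {n₁ m₁ n₂ m₂ : ℕ}
    (h₁ : Nat.Coprime n₁ m₁) (h₂ : Nat.Coprime n₂ m₂) (F G : ℕ → ℕ → R) :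
    ∑ b₁ ∈ range (n₁ * m₁), ∑ b₂ ∈ range (n₂ * m₂),
        F (b₁ % n₁) (b₂ % n₂) * G (b₁ % m₁) (b₂ % m₂) =
      (∑ x₁ ∈ range n₁, ∑ x₂ ∈ range n₂, F x₁ x₂) * ∑ y₁ ∈ range m₁, ∑ y₂ ∈ range m₂, G y₁ y₂ := by
  rw [sum_range_mul_eq_sum_sum_mod h₁
    fun x₁ y₁ => ∑ b₂ ∈ range (n₂ * m₂), F x₁ (b₂ % n₂) * G y₁ (b₂ % m₂)]
  refine (sum_congr rfl fun x₁ _ => sum_congr rfl fun y₁ _ =>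
    sum_range_mul_eq_sum_sum_mod h₂ fun x₂ y₂ => F x₁ x₂ * G y₁ y₂).trans ?_
  simp only [sum_mul_sum]

theorem kron2_congr {a a' : ℤ} (h : a ≡ a' [ZMOD 8]) : kron2 a = kron2 a' := by
  have h8 : a % 8 = a' % 8 := h
  have h2 : (2 ∣ a) ↔ (2 ∣ a') := by omega
  simp only [kron2, h8, h2]

theorem kron_mul_right (a : ℤ) {m n : ℕ} (hm : m ≠ 0) (hn : n ≠ 0) :
    kron a (m * n) = kron a m * kron a n := by
  have hodd : (m * n) / 2 ^ (m * n).factorization 2 =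
      (m / 2 ^ m.factorization 2) * (n / 2 ^ n.factorization 2) := Nat.ordCompl_mul m n 2
  rw [kron, kron, kron, hodd, Nat.factorization_mul hm hn, Finsupp.add_apply, pow_add,
    jacobiSym.mul_right' a (Nat.ordCompl_pos 2 hm).ne' (Nat.ordCompl_pos 2 hn).ne']
  ring

theorem kron_congr {a a' : ℤ} {n : ℕ} (h : a ≡ a' [ZMOD 4 * n]) : kron a n = kron a' n := by
  have hodd : jacobiSym a (n / 2 ^ n.factorization 2) = jacobiSym a' (n / 2 ^ n.factorization 2) :=
    jacobiSym.mod_left' (h.of_dvd (Int.natCast_dvd_natCast.2 ((Nat.ordCompl_dvd n 2).trans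
      (dvd_mul_left n 4)) |>.trans (by push_cast; rfl)))
  rw [kron, kron, hodd]
  rcases eq_or_ne (n.factorization 2) 0 with h0 | h0
  · simp only [h0, pow_zero]
  · have h8 : (8 : ℤ) ∣ 4 * n := by
      obtain ⟨k, rfl⟩ := Nat.dvd_of_factorization_pos h0
      exact ⟨k, by push_cast; ring⟩
    rw [kron2_congr (h.of_dvd h8)]

theorem S2fun_of_not_two_dvd (a : ℕ) {n : ℕ} (h : ¬ 2 ∣ n) : S2fun a n = 1 := if_pos h

theorem S2fun_mul_of_not_two_dvd {a a' n m : ℕ} (hm : ¬ 2 ∣ m) (h : a ≡ a' [MOD 4 * n]) :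
    S2fun a (n * m) = S2fun a' n := by
  have hnm : 2 ∣ n * m ↔ 2 ∣ n := by
    rw [Nat.prime_two.dvd_mul]
    exact or_iff_left hm
  by_cases hn : 2 ∣ n
  · have h8 : a % 8 = a' % 8 := h.of_dvd (by obtain ⟨k, rfl⟩ := hn; exact ⟨k, by ring⟩)
    simp only [S2fun, hnm, h8]
  · simp only [S2fun, hnm, hn, not_false_eq_true, if_true]

theorem Cpl_mul_of_not_dvd (p : ℕ) {a a' : ℤ} (f : ℕ) {n m ℓ : ℕ} (hm : ¬ ℓ ∣ m)
    (h : a ≡ a' [ZMOD 4 * n]) : Cpl p a f (n * m) ℓ = Cpl p a' f n ℓ := by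
  have hdiff : (ℓ : ℤ) ^ (4 * n * f ^ 2).factorization ℓ ∣ a * f ^ 2 - a' * f ^ 2 := by
    have hord : ((ℓ ^ (4 * n * f ^ 2).factorization ℓ : ℕ) : ℤ) ∣ ((4 * n * f ^ 2 : ℕ) : ℤ) :=
      Int.natCast_dvd_natCast.2 (Nat.ordProj_dvd _ _)
    push_cast at hord
    exact hord.trans (by rw [← sub_mul]; exact mul_dvd_mul_right (Int.ModEq.dvd h.symm) _)
  simp only [Cpl, factorization_four_mul_mul_sq_of_not_dvd n f hm]
  congr 1
  refine Finset.filter_congr fun x _ => and_congr_right fun _ => ?_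
  rw [show Dfun p x - a' * f ^ 2 = Dfun p x - a * f ^ 2 + (a * f ^ 2 - a' * f ^ 2) by ring,
    dvd_add_left hdiff]

theorem comp_sel_mul_of_not_dvd {β : Type*} (g : ℕ × ℕ × ℕ → β)
    {f₁ f₂ n₁ n₂ m₁ m₂ a₁ a₂ b₁ b₂ ℓ : ℕ} (hm : ¬ ℓ ∣ m₁ * m₂)
    (hg₁ : g (a₁, f₁, n₁ * m₁) = g (b₁, f₁, n₁)) (hg₂ : g (a₂, f₂, n₂ * m₂) = g (b₂, f₂, n₂)) :
    g (sel f₁ f₂ (n₁ * m₁) (n₂ * m₂) a₁ a₂ ℓ) = g (sel f₁ f₂ n₁ n₂ b₁ b₂ ℓ) := by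
  unfold sel
  rw [factorization_four_mul_mul_sq_of_not_dvd n₁ f₁ fun h => hm (h.mul_right m₂),
    factorization_four_mul_mul_sq_of_not_dvd n₂ f₂ fun h => hm (h.mul_left m₁)]
  split_ifs
  · exact hg₁
  · exact hg₂

def IsCpfPair (f₁ f₂ n₁ n₂ a₁ a₂ : ℕ) : Prop :=
  Nat.Coprime a₁ (4 * n₁) ∧ Nat.Coprime a₂ (4 * n₂) ∧ a₁ % 4 = 1 ∧ a₂ % 4 = 1 ∧
    a₁ * f₁ ^ 2 ≡ a₂ * f₂ ^ 2 [MOD Nat.gcd (4 * n₁ * f₁ ^ 2) (4 * n₂ * f₂ ^ 2)]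

def twoAdicFactor (f₁ f₂ n₁ n₂ a₁ a₂ : ℕ) : ℤ :=
  S2fun (sel f₁ f₂ n₁ n₂ a₁ a₂ 2).1 (sel f₁ f₂ n₁ n₂ a₁ a₂ 2).2.2

def localFactor (p f₁ f₂ n₁ n₂ a₁ a₂ ℓ : ℕ) : ℤ :=
  Cpl p (sel f₁ f₂ n₁ n₂ a₁ a₂ ℓ).1 (sel f₁ f₂ n₁ n₂ a₁ a₂ ℓ).2.1 (sel f₁ f₂ n₁ n₂ a₁ a₂ ℓ).2.2 ℓ

def CpfTerm (p f₁ f₂ n₁ n₂ a₁ a₂ : ℕ) : ℤ :=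
  if IsCpfPair f₁ f₂ n₁ n₂ a₁ a₂ then
    kron a₁ n₁ * kron a₂ n₂ * twoAdicFactor f₁ f₂ n₁ n₂ a₁ a₂ *
      ∏ ℓ ∈ (n₁ * n₂).primeFactors.erase 2, localFactor p f₁ f₂ n₁ n₂ a₁ a₂ ℓ
  else 0

theorem Cpf_eq_sum_CpfTerm (p f₁ f₂ n₁ n₂ : ℕ) :
    Cpf p f₁ f₂ n₁ n₂ =
      ∑ a₁ ∈ Finset.range (4 * n₁), ∑ a₂ ∈ Finset.range (4 * n₂), CpfTerm p f₁ f₂ n₁ n₂ a₁ a₂ := by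
  unfold Cpf CpfTerm
  exact Finset.sum_congr rfl fun _ _ => Finset.sum_congr rfl fun _ _ => if_congr Iff.rfl rfl rfl

theorem Cpf_eq_sum_range (p f₁ f₂ n₁ n₂ : ℕ) :
    Cpf p f₁ f₂ n₁ n₂ = ∑ b₁ ∈ Finset.range n₁, ∑ b₂ ∈ Finset.range n₂,
      CpfTerm p f₁ f₂ n₁ n₂ (1 + 4 * b₁) (1 + 4 * b₂) := by
  have hvanish {a₁ a₂ : ℕ} (h : a₁ % 4 ≠ 1 ∨ a₂ % 4 ≠ 1) : CpfTerm p f₁ f₂ n₁ n₂ a₁ a₂ = 0 :=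
    if_neg fun hpair => h.elim (· hpair.2.2.1) (· hpair.2.2.2.1)
  rw [Cpf_eq_sum_CpfTerm, Finset.sum_range_mul_eq_sum_add_mul (by norm_num) _ _
    fun _ ha => Finset.sum_eq_zero fun _ _ => hvanish (.inl ha)]
  exact Finset.sum_congr rfl fun _ _ =>
    Finset.sum_range_mul_eq_sum_add_mul (by norm_num) _ _ fun _ ha => hvanish (.inr ha)

section Splitting

variable {f₁ f₂ n₁ n₂ m₁ m₂ a₁ a₂ b₁ b₂ c₁ c₂ : ℕ}

theorem twoAdicFactor_of_not_two_dvd (a₁ a₂ : ℕ) (h : ¬ 2 ∣ n₁ * n₂) :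
    twoAdicFactor f₁ f₂ n₁ n₂ a₁ a₂ = 1 := by
  unfold twoAdicFactor sel
  split_ifs
  · exact S2fun_of_not_two_dvd _ fun h₁ => h (h₁.mul_right n₂)
  · exact S2fun_of_not_two_dvd _ fun h₂ => h (h₂.mul_left n₁)

theorem twoAdicFactor_mul_of_not_two_dvd (hm : ¬ 2 ∣ m₁ * m₂)
    (h₁ : a₁ ≡ b₁ [MOD 4 * n₁]) (h₂ : a₂ ≡ b₂ [MOD 4 * n₂]) :
    twoAdicFactor f₁ f₂ (n₁ * m₁) (n₂ * m₂) a₁ a₂ = twoAdicFactor f₁ f₂ n₁ n₂ b₁ b₂ :=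
  comp_sel_mul_of_not_dvd (fun t => S2fun t.1 t.2.2) hm
    (S2fun_mul_of_not_two_dvd (fun h => hm (h.mul_right m₂)) h₁)
    (S2fun_mul_of_not_two_dvd (fun h => hm (h.mul_left m₁)) h₂)

theorem localFactor_mul_of_not_dvd (p : ℕ) {ℓ : ℕ} (hm : ¬ ℓ ∣ m₁ * m₂)
    (h₁ : a₁ ≡ b₁ [MOD 4 * n₁]) (h₂ : a₂ ≡ b₂ [MOD 4 * n₂]) :
    localFactor p f₁ f₂ (n₁ * m₁) (n₂ * m₂) a₁ a₂ ℓ = localFactor p f₁ f₂ n₁ n₂ b₁ b₂ ℓ :=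
  comp_sel_mul_of_not_dvd (fun t => (Cpl p t.1 t.2.1 t.2.2 ℓ : ℤ)) hm
    (congrArg _ (Cpl_mul_of_not_dvd p f₁ (fun h => hm (h.mul_right m₂)) (by exact_mod_cast h₁)))
    (congrArg _ (Cpl_mul_of_not_dvd p f₂ (fun h => hm (h.mul_left m₁)) (by exact_mod_cast h₂)))

theorem twoAdicFactor_mul (hco : Nat.Coprime (n₁ * n₂) (m₁ * m₂))
    (hb₁ : a₁ ≡ b₁ [MOD 4 * n₁]) (hb₂ : a₂ ≡ b₂ [MOD 4 * n₂])
    (hc₁ : a₁ ≡ c₁ [MOD 4 * m₁]) (hc₂ : a₂ ≡ c₂ [MOD 4 * m₂]) :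
    twoAdicFactor f₁ f₂ (n₁ * m₁) (n₂ * m₂) a₁ a₂ =
      twoAdicFactor f₁ f₂ n₁ n₂ b₁ b₂ * twoAdicFactor f₁ f₂ m₁ m₂ c₁ c₂ := by
  by_cases hn : 2 ∣ n₁ * n₂
  · have hm : ¬ 2 ∣ m₁ * m₂ := fun hm =>
      Nat.prime_two.ne_one (Nat.eq_one_of_dvd_coprimes hco hn hm)
    rw [twoAdicFactor_mul_of_not_two_dvd hm hb₁ hb₂, twoAdicFactor_of_not_two_dvd c₁ c₂ hm,
      mul_one]
  · rw [mul_comm n₁, mul_comm n₂, twoAdicFactor_mul_of_not_two_dvd hn hc₁ hc₂,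
      twoAdicFactor_of_not_two_dvd b₁ b₂ hn, one_mul]

theorem prod_localFactor_mul (p : ℕ) (hn₁ : n₁ ≠ 0) (hn₂ : n₂ ≠ 0) (hm₁ : m₁ ≠ 0) (hm₂ : m₂ ≠ 0)
    (hco : Nat.Coprime (n₁ * n₂) (m₁ * m₂))
    (hb₁ : a₁ ≡ b₁ [MOD 4 * n₁]) (hb₂ : a₂ ≡ b₂ [MOD 4 * n₂])
    (hc₁ : a₁ ≡ c₁ [MOD 4 * m₁]) (hc₂ : a₂ ≡ c₂ [MOD 4 * m₂]) :
    ∏ ℓ ∈ (n₁ * m₁ * (n₂ * m₂)).primeFactors.erase 2,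
        localFactor p f₁ f₂ (n₁ * m₁) (n₂ * m₂) a₁ a₂ ℓ =
      (∏ ℓ ∈ (n₁ * n₂).primeFactors.erase 2, localFactor p f₁ f₂ n₁ n₂ b₁ b₂ ℓ) *
        ∏ ℓ ∈ (m₁ * m₂).primeFactors.erase 2, localFactor p f₁ f₂ m₁ m₂ c₁ c₂ ℓ := by
  rw [show n₁ * m₁ * (n₂ * m₂) = n₁ * n₂ * (m₁ * m₂) by ring,
    Nat.primeFactors_mul (by positivity) (by positivity), Finset.erase_union_distrib,
    Finset.prod_union (hco.disjoint_primeFactors.mono (Finset.erase_subset _ _)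
      (Finset.erase_subset _ _))]
  congr 1
  · refine Finset.prod_congr rfl fun ℓ hℓ => ?_
    obtain ⟨-, hℓ, hℓn, -⟩ := Finset.mem_erase.1 hℓ |>.imp_right Nat.mem_primeFactors.1
    have hℓm : ¬ ℓ ∣ m₁ * m₂ := fun h => hℓ.ne_one (Nat.eq_one_of_dvd_coprimes hco hℓn h)
    exact localFactor_mul_of_not_dvd p hℓm hb₁ hb₂
  · refine Finset.prod_congr rfl fun ℓ hℓ => ?_
    obtain ⟨-, hℓ, hℓm, -⟩ := Finset.mem_erase.1 hℓ |>.imp_right Nat.mem_primeFactors.1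
    have hℓn : ¬ ℓ ∣ n₁ * n₂ := fun h => hℓ.ne_one (Nat.eq_one_of_dvd_coprimes hco h hℓm)
    rw [mul_comm n₁, mul_comm n₂]
    exact localFactor_mul_of_not_dvd p hℓn hc₁ hc₂

theorem isCpfPair_mul_iff (hco : Nat.Coprime (n₁ * n₂) (m₁ * m₂))
    (hb₁ : a₁ ≡ b₁ [MOD 4 * n₁]) (hb₂ : a₂ ≡ b₂ [MOD 4 * n₂])
    (hc₁ : a₁ ≡ c₁ [MOD 4 * m₁]) (hc₂ : a₂ ≡ c₂ [MOD 4 * m₂]) :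
    IsCpfPair f₁ f₂ (n₁ * m₁) (n₂ * m₂) a₁ a₂ ↔
      IsCpfPair f₁ f₂ n₁ n₂ b₁ b₂ ∧ IsCpfPair f₁ f₂ m₁ m₂ c₁ c₂ := by
  have hunit {a b c n m : ℕ} (hb : a ≡ b [MOD 4 * n]) (hc : a ≡ c [MOD 4 * m]) :
      Nat.Coprime a (4 * (n * m)) ↔ Nat.Coprime b (4 * n) ∧ Nat.Coprime c (4 * m) := by
    rw [Nat.coprime_four_mul_mul_iff, hb.coprime_iff, hc.coprime_iff]
  have hone {a b c n m : ℕ} (hb : a ≡ b [MOD 4 * n]) (hc : a ≡ c [MOD 4 * m]) :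
      a % 4 = 1 ↔ b % 4 = 1 ∧ c % 4 = 1 := by
    rw [← hb.of_dvd (dvd_mul_right 4 n), ← hc.of_dvd (dvd_mul_right 4 m), and_self]
  have hsq {a b n f k : ℕ} (h : a ≡ b [MOD 4 * n]) (hk : k ∣ 4 * n * f ^ 2) :
      a * f ^ 2 ≡ b * f ^ 2 [MOD k] := (h.mul_right' _).of_dvd hk
  have transfer {x x' y y' k : ℕ} (hx : x ≡ x' [MOD k]) (hy : y ≡ y' [MOD k]) :
      x ≡ y [MOD k] ↔ x' ≡ y' [MOD k] := by
    unfold Nat.ModEq at *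
    rw [hx, hy]
  have hgcd : Nat.gcd (4 * (n₁ * m₁) * f₁ ^ 2) (4 * (n₂ * m₂) * f₂ ^ 2) =
      Nat.lcm (Nat.gcd (4 * n₁ * f₁ ^ 2) (4 * n₂ * f₂ ^ 2))
        (Nat.gcd (4 * m₁ * f₁ ^ 2) (4 * m₂ * f₂ ^ 2)) := by
    simp only [fun n f : ℕ => show 4 * n * f ^ 2 = 4 * f ^ 2 * n by ring]
    exact Nat.gcd_mul_mul_eq_lcm_gcd hco
  unfold IsCpfPair
  rw [hunit hb₁ hc₁, hunit hb₂ hc₂, hone hb₁ hc₁, hone hb₂ hc₂, hgcd,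
    ← Nat.modEq_and_modEq_iff_modEq_lcm,
    transfer (hsq hb₁ (Nat.gcd_dvd_left _ _)) (hsq hb₂ (Nat.gcd_dvd_right _ _)),
    transfer (hsq hc₁ (Nat.gcd_dvd_left _ _)) (hsq hc₂ (Nat.gcd_dvd_right _ _))]
  tauto

theorem CpfTerm_mul (p : ℕ) (hn₁ : n₁ ≠ 0) (hn₂ : n₂ ≠ 0) (hm₁ : m₁ ≠ 0) (hm₂ : m₂ ≠ 0)
    (hco : Nat.Coprime (n₁ * n₂) (m₁ * m₂))
    (hb₁ : a₁ ≡ b₁ [MOD 4 * n₁]) (hb₂ : a₂ ≡ b₂ [MOD 4 * n₂])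
    (hc₁ : a₁ ≡ c₁ [MOD 4 * m₁]) (hc₂ : a₂ ≡ c₂ [MOD 4 * m₂]) :
    CpfTerm p f₁ f₂ (n₁ * m₁) (n₂ * m₂) a₁ a₂ =
      CpfTerm p f₁ f₂ n₁ n₂ b₁ b₂ * CpfTerm p f₁ f₂ m₁ m₂ c₁ c₂ := by
  have hkron {a b c n m : ℕ} (hn : n ≠ 0) (hm : m ≠ 0) (hb : a ≡ b [MOD 4 * n])
      (hc : a ≡ c [MOD 4 * m]) : kron a (n * m) = kron b n * kron c m := by
    have hb' : (a : ℤ) ≡ b [ZMOD 4 * n] := by exact_mod_cast hb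
    have hc' : (a : ℤ) ≡ c [ZMOD 4 * m] := by exact_mod_cast hc
    rw [kron_mul_right _ hn hm, kron_congr hb', kron_congr hc']
  unfold CpfTerm
  rw [ite_zero_mul_ite_zero, if_congr (isCpfPair_mul_iff hco hb₁ hb₂ hc₁ hc₂) rfl rfl,
    hkron hn₁ hm₁ hb₁ hc₁, hkron hn₂ hm₂ hb₂ hc₂, twoAdicFactor_mul hco hb₁ hb₂ hc₁ hc₂,
    prod_localFactor_mul p hn₁ hn₂ hm₁ hm₂ hco hb₁ hb₂ hc₁ hc₂]
  congr 1
  ring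

end Splitting

theorem Cpf_one_one (p : ℕ) {f₁ f₂ : ℕ} (hf₁ : Odd f₁) (hf₂ : Odd f₂) : Cpf p f₁ f₂ 1 1 = 1 := by
  have hpair : IsCpfPair f₁ f₂ 1 1 1 1 :=
    ⟨by norm_num, by norm_num, rfl, rfl, by simpa using sq_modEq_sq_of_odd hf₁ hf₂⟩
  rw [Cpf_eq_sum_range, Finset.sum_range_one, Finset.sum_range_one, CpfTerm, if_pos hpair]
  simp [kron, twoAdicFactor_of_not_two_dvd]

theorem Cpf_multiplicative_general (p : ℕ)
    (f₁ f₂ : ℕ) (hf₁ : Odd f₁) (hf₂ : Odd f₂) :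
    Cpf p f₁ f₂ 1 1 = 1 ∧
    ∀ n₁' n₁'' n₂' n₂'' : ℕ, 0 < n₁' → 0 < n₁'' → 0 < n₂' → 0 < n₂'' →
      Nat.Coprime (n₁' * n₂') (n₁'' * n₂'') →
      Cpf p f₁ f₂ (n₁' * n₁'') (n₂' * n₂'') =
        Cpf p f₁ f₂ n₁' n₂' * Cpf p f₁ f₂ n₁'' n₂'' := by
  refine ⟨Cpf_one_one p hf₁ hf₂, fun n₁ m₁ n₂ m₂ hn₁ hm₁ hn₂ hm₂ hco => ?_⟩
  have hmod {b n : ℕ} : 1 + 4 * b ≡ 1 + 4 * (b % n) [MOD 4 * n] :=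
    ((Nat.mod_modEq b n).symm.mul_left' 4).add_left 1
  simp only [Cpf_eq_sum_range]
  have hco₁ : Nat.Coprime n₁ m₁ :=
    (hco.coprime_dvd_left (dvd_mul_right n₁ n₂)).coprime_dvd_right (dvd_mul_right m₁ m₂)
  have hco₂ : Nat.Coprime n₂ m₂ :=
    (hco.coprime_dvd_left (dvd_mul_left n₂ n₁)).coprime_dvd_right (dvd_mul_left m₂ m₁)
  rw [← Finset.sum_sum_range_mul_eq_mul hco₁ hco₂]
  exact Finset.sum_congr rfl fun b₁ _ => Finset.sum_congr rfl fun b₂ _ =>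
    CpfTerm_mul p hn₁.ne' hn₂.ne' hm₁.ne' hm₂.ne' hco hmod hmod hmod hmod

/-- Lemma 3.4 (i): `C_{p,f}(n₁,n₂)` is multiplicative in the two variables `(n₁,n₂)`. -/
theorem Cpf_multiplicative (p : ℕ) (hp : p.Prime) (hp2 : p ≠ 2)
    (f₁ f₂ : ℕ) (hf₁ : Odd f₁) (hf₂ : Odd f₂) (hf₁0 : 0 < f₁) (hf₂0 : 0 < f₂) :
    Cpf p f₁ f₂ 1 1 = 1 ∧
    ∀ n₁' n₁'' n₂' n₂'' : ℕ, 0 < n₁' → 0 < n₁'' → 0 < n₂' → 0 < n₂'' →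
      Nat.Coprime (n₁' * n₂') (n₁'' * n₂'') →
      Cpf p f₁ f₂ (n₁' * n₁'') (n₂' * n₂'') =
        Cpf p f₁ f₂ n₁' n₂' * Cpf p f₁ f₂ n₁'' n₂'' :=
  Cpf_multiplicative_general p f₁ f₂ hf₁ hf₂

end
end

section
/- Let p be an odd prime and f₁, f₂ odd positive integers, and let α₁, α₂ be non-negative integers. Then C_{p,f}(2^{α₁}, 2^{α₂}) = 2^{max(α₁,α₂)}·(−1)^{α₁+α₂}. -/
open scoped Classical

noncomputable section

lemma sq_mod8 (f : ℕ) (hf : Odd f) : f ^ 2 % 8 = 1 := by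
  have h2 := Nat.pow_mod f 2 8
  have h : f % 2 = 1 := Nat.odd_iff.mp hf
  have h8 : f % 8 = 1 ∨ f % 8 = 3 ∨ f % 8 = 5 ∨ f % 8 = 7 := by omega
  rcases h8 with h8 | h8 | h8 | h8 <;> rw [h8] at h2 <;> simpa using h2

lemma kron2_of_five (a : ℤ) (h : a % 8 = 5) : kron2 a = -1 := by
  unfold kron2
  rw [if_neg, if_neg] <;> omega

lemma innerSumLemma (f₁ f₂ a₁ : ℕ) (hf₁ : Odd f₁) (hf₂ : Odd f₂) (α₂ : ℕ) (h5 : a₁ % 8 = 5) :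
    ∑ a₂ ∈ Finset.range (2 ^ (α₂ + 2)),
      (if a₂ % 4 = 1 ∧ (a₁ * f₁ ^ 2) % 2 ^ (α₂ + 2) = (a₂ * f₂ ^ 2) % 2 ^ (α₂ + 2)
        then (kron2 (a₂ : ℤ)) ^ α₂ else 0 : ℤ) = (-1) ^ α₂ := by
  set N := 2 ^ (α₂ + 2) with hN
  haveI : NeZero N := ⟨pow_ne_zero _ two_ne_zero⟩
  have hf₁8 := sq_mod8 f₁ hf₁
  have hf₂8 := sq_mod8 f₂ hf₂
  have hcop : Nat.Coprime f₂ N := by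
    apply Nat.Coprime.pow_right
    rw [Nat.coprime_comm]
    exact (Nat.Prime.coprime_iff_not_dvd Nat.prime_two).mpr (by
      have := Nat.odd_iff.mp hf₂; omega)
  have hu : IsUnit ((f₂ : ZMod N) ^ 2) := ((ZMod.isUnit_iff_coprime f₂ N).mpr hcop).pow 2
  set z : ZMod N := (↑(a₁ * f₁ ^ 2)) * ((f₂ : ZMod N) ^ 2)⁻¹ with hz
  set c : ℕ := z.val with hc
  have hzc : ((c : ℕ) : ZMod N) = z := by
    rw [hc, ZMod.natCast_val, ZMod.cast_id]
  have key : ∀ a₂ : ℕ, a₂ < N →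
      ((a₁ * f₁ ^ 2) % N = (a₂ * f₂ ^ 2) % N ↔ a₂ = c) := by
    intro a₂ hlt
    constructor
    · intro h
      have h' : ((a₁ * f₁ ^ 2 : ℕ) : ZMod N) = ((a₂ * f₂ ^ 2 : ℕ) : ZMod N) :=
        (ZMod.natCast_eq_natCast_iff _ _ _).mpr h
      push_cast at h'
      have : (a₂ : ZMod N) = z := by
        rw [hz]
        push_cast
        rw [h', mul_assoc, ZMod.mul_inv_of_unit _ hu, mul_one]
      have := congrArg ZMod.val this
      rwa [ZMod.val_cast_of_lt hlt] at this
    · rintro rfl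
      have h' : ((c * f₂ ^ 2 : ℕ) : ZMod N) = ((a₁ * f₁ ^ 2 : ℕ) : ZMod N) := by
        rw [Nat.cast_mul, Nat.cast_pow, hzc, hz, mul_assoc, ZMod.inv_mul_of_unit _ hu, mul_one]
      exact ((ZMod.natCast_eq_natCast_iff _ _ _).mp h').symm
  have hkey2 : (c * f₂ ^ 2) % N = (a₁ * f₁ ^ 2) % N := by
    have h' : ((c * f₂ ^ 2 : ℕ) : ZMod N) = ((a₁ * f₁ ^ 2 : ℕ) : ZMod N) := by
      rw [Nat.cast_mul, Nat.cast_pow, hzc, hz, mul_assoc, ZMod.inv_mul_of_unit _ hu, mul_one]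
    exact (ZMod.natCast_eq_natCast_iff _ _ _).mp h'
  have hc4 : c % 4 = 1 := by
    have h4 : (4 : ℕ) ∣ N := by
      rw [hN, pow_add]; exact Dvd.intro_left _ rfl
    have e4 : (c * f₂ ^ 2) % 4 = (a₁ * f₁ ^ 2) % 4 := Nat.ModEq.of_dvd h4 hkey2
    rw [Nat.mul_mod, Nat.mul_mod a₁] at e4
    have e1 : f₂ ^ 2 % 4 = 1 := by omega
    have e2 : f₁ ^ 2 % 4 = 1 := by omega
    rw [e1, e2, mul_one, mul_one, Nat.mod_mod_of_dvd, Nat.mod_mod_of_dvd] at e4 <;> omega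
  have hclt : c < N := ZMod.val_lt z
  have step : ∀ a₂ ∈ Finset.range N,
      (if a₂ % 4 = 1 ∧ (a₁ * f₁ ^ 2) % N = (a₂ * f₂ ^ 2) % N
        then (kron2 (a₂ : ℤ)) ^ α₂ else 0 : ℤ) =
      (if a₂ = c then (kron2 (a₂ : ℤ)) ^ α₂ else 0) := by
    intro a₂ ha₂
    have hlt := Finset.mem_range.mp ha₂
    by_cases he : a₂ = c
    · rw [if_pos ⟨by rw [he]; exact hc4, (key a₂ hlt).mpr he⟩, if_pos he]
    · rw [if_neg he, if_neg (fun h => he ((key a₂ hlt).mp h.2))]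
  rw [Finset.sum_congr rfl step, Finset.sum_ite_eq' (Finset.range N) c
    (fun a₂ => (kron2 (a₂ : ℤ)) ^ α₂), if_pos (Finset.mem_range.mpr hclt)]
  cases α₂ with
  | zero => simp
  | succ β =>
    have h8 : (8 : ℕ) ∣ N := by
      rw [hN, show β + 1 + 2 = β + 3 from rfl, pow_add]
      exact Dvd.intro_left _ rfl
    have e8 : (c * f₂ ^ 2) % 8 = (a₁ * f₁ ^ 2) % 8 := Nat.ModEq.of_dvd h8 hkey2
    rw [Nat.mul_mod, Nat.mul_mod a₁, hf₁8, hf₂8, mul_one, mul_one, h5,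
      Nat.mod_mod_of_dvd] at e8
    · have hc8 : c % 8 = 5 := by omega
      rw [kron2_of_five (c : ℤ) (by omega)]
    · omega

lemma not_two_dvd_sq (f : ℕ) (hf : Odd f) : ¬ 2 ∣ f ^ 2 := by
  intro h
  have := Nat.Prime.dvd_of_dvd_pow Nat.prime_two h
  have := Nat.odd_iff.mp hf
  omega

lemma coprime_four (a α : ℕ) (h : a % 4 = 1) : Nat.Coprime a (4 * 2 ^ α) := by
  have h4 : 4 * 2 ^ α = 2 ^ (α + 2) := by rw [pow_add]; ring
  rw [h4]
  exact Nat.Coprime.pow_right _ (Nat.coprime_two_right.mpr (Nat.odd_iff.mpr (by omega)))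

lemma gcd_eval (f₁ f₂ α₁ α₂ : ℕ) (hf₂ : Odd f₂) (hle : α₂ ≤ α₁) :
    Nat.gcd (4 * 2 ^ α₁ * f₁ ^ 2) (4 * 2 ^ α₂ * f₂ ^ 2) =
      2 ^ (α₂ + 2) * Nat.gcd (f₁ ^ 2) (f₂ ^ 2) := by
  have hp : 2 ^ (α₂ + 2) * 2 ^ (α₁ - α₂) = 4 * 2 ^ α₁ := by
    rw [← pow_add, show α₂ + 2 + (α₁ - α₂) = α₁ + 2 by omega, pow_add]
    ring
  have h1 : 4 * 2 ^ α₁ * f₁ ^ 2 = 2 ^ (α₂ + 2) * (2 ^ (α₁ - α₂) * f₁ ^ 2) := by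
    rw [← mul_assoc, hp]
  have h2 : 4 * 2 ^ α₂ * f₂ ^ 2 = 2 ^ (α₂ + 2) * f₂ ^ 2 := by rw [pow_add]; ring
  rw [h1, h2, Nat.gcd_mul_left]
  congr 1
  apply Nat.Coprime.gcd_mul_left_cancel
  exact Nat.Coprime.pow_left _
    ((Nat.prime_two.coprime_iff_not_dvd).mpr (not_two_dvd_sq f₂ hf₂))

lemma cond_iff (f₁ f₂ α₁ α₂ : ℕ) (hf₁ : Odd f₁) (hf₂ : Odd f₂) (hle : α₂ ≤ α₁)
    (a₁ a₂ : ℕ) :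
    (Nat.Coprime a₁ (4 * 2 ^ α₁) ∧ Nat.Coprime a₂ (4 * 2 ^ α₂) ∧ a₁ % 4 = 1 ∧ a₂ % 4 = 1 ∧
        (a₁ * f₁ ^ 2) % (Nat.gcd (4 * 2 ^ α₁ * f₁ ^ 2) (4 * 2 ^ α₂ * f₂ ^ 2)) =
          (a₂ * f₂ ^ 2) % (Nat.gcd (4 * 2 ^ α₁ * f₁ ^ 2) (4 * 2 ^ α₂ * f₂ ^ 2))) ↔
      (a₁ % 4 = 1 ∧ a₂ % 4 = 1 ∧
        (a₁ * f₁ ^ 2) % 2 ^ (α₂ + 2) = (a₂ * f₂ ^ 2) % 2 ^ (α₂ + 2)) := by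
  rw [gcd_eval f₁ f₂ α₁ α₂ hf₂ hle]
  set g := Nat.gcd (f₁ ^ 2) (f₂ ^ 2) with hg
  have hgodd : ¬ 2 ∣ g := fun h => not_two_dvd_sq f₁ hf₁ (h.trans (Nat.gcd_dvd_left _ _))
  have hcopNg : Nat.Coprime (2 ^ (α₂ + 2)) g :=
    Nat.Coprime.pow_left _ ((Nat.prime_two.coprime_iff_not_dvd).mpr hgodd)
  constructor
  · rintro ⟨-, -, h1, h2, h3⟩
    exact ⟨h1, h2, Nat.ModEq.of_dvd (dvd_mul_right _ g) h3⟩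
  · rintro ⟨h1, h2, h3⟩
    refine ⟨coprime_four a₁ α₁ h1, coprime_four a₂ α₂ h2, h1, h2, ?_⟩
    have e1 : (a₁ * f₁ ^ 2) ≡ 0 [MOD g] :=
      (Nat.modEq_zero_iff_dvd).mpr ((Nat.gcd_dvd_left _ _).mul_left a₁)
    have e2 : (a₂ * f₂ ^ 2) ≡ 0 [MOD g] :=
      (Nat.modEq_zero_iff_dvd).mpr ((Nat.gcd_dvd_right _ _).mul_left a₂)
    exact (Nat.modEq_and_modEq_iff_modEq_mul hcopNg).mp ⟨h3, e1.trans e2.symm⟩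

lemma count58 (k : ℕ) :
    ((Finset.range (8 * k)).filter (fun a => a % 8 = 5)).card = k := by
  have h : (Finset.range (8 * k)).filter (fun a => a % 8 = 5) =
      (Finset.range k).image (fun j => 8 * j + 5) := by
    ext a
    simp only [Finset.mem_filter, Finset.mem_image, Finset.mem_range]
    constructor
    · rintro ⟨h1, h2⟩; exact ⟨a / 8, by omega, by omega⟩
    · rintro ⟨j, hj, rfl⟩; omega
  rw [h, Finset.card_image_of_injective _ (fun x y h => by omega), Finset.card_range]

lemma coreLemma (f₁ f₂ : ℕ) (hf₁ : Odd f₁) (hf₂ : Odd f₂) (α₁ α₂ : ℕ) (hle : α₂ ≤ α₁) :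
    ∑ a₁ ∈ Finset.range (4 * 2 ^ α₁), ∑ a₂ ∈ Finset.range (4 * 2 ^ α₂),
      (if Nat.Coprime a₁ (4 * 2 ^ α₁) ∧ Nat.Coprime a₂ (4 * 2 ^ α₂) ∧ a₁ % 4 = 1 ∧ a₂ % 4 = 1 ∧
          (a₁ * f₁ ^ 2) % (Nat.gcd (4 * 2 ^ α₁ * f₁ ^ 2) (4 * 2 ^ α₂ * f₂ ^ 2)) =
            (a₂ * f₂ ^ 2) % (Nat.gcd (4 * 2 ^ α₁ * f₁ ^ 2) (4 * 2 ^ α₂ * f₂ ^ 2)) then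
        kron2 (a₁ : ℤ) ^ α₁ * kron2 (a₂ : ℤ) ^ α₂ * S2fun a₁ (2 ^ α₁) else 0 : ℤ)
    = 2 ^ α₁ * (-1) ^ (α₁ + α₂) := by
  have hstep : ∀ a₁ ∈ Finset.range (4 * 2 ^ α₁), ∀ a₂ ∈ Finset.range (4 * 2 ^ α₂),
      (if Nat.Coprime a₁ (4 * 2 ^ α₁) ∧ Nat.Coprime a₂ (4 * 2 ^ α₂) ∧ a₁ % 4 = 1 ∧ a₂ % 4 = 1 ∧
          (a₁ * f₁ ^ 2) % (Nat.gcd (4 * 2 ^ α₁ * f₁ ^ 2) (4 * 2 ^ α₂ * f₂ ^ 2)) =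
            (a₂ * f₂ ^ 2) % (Nat.gcd (4 * 2 ^ α₁ * f₁ ^ 2) (4 * 2 ^ α₂ * f₂ ^ 2)) then
        kron2 (a₁ : ℤ) ^ α₁ * kron2 (a₂ : ℤ) ^ α₂ * S2fun a₁ (2 ^ α₁) else 0 : ℤ) =
      (if a₁ % 4 = 1 ∧ a₂ % 4 = 1 ∧
          (a₁ * f₁ ^ 2) % 2 ^ (α₂ + 2) = (a₂ * f₂ ^ 2) % 2 ^ (α₂ + 2) then
        kron2 (a₁ : ℤ) ^ α₁ * kron2 (a₂ : ℤ) ^ α₂ * S2fun a₁ (2 ^ α₁) else 0 : ℤ) := by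
    intro a₁ _ a₂ _
    exact if_congr (cond_iff f₁ f₂ α₁ α₂ hf₁ hf₂ hle a₁ a₂) rfl rfl
  rw [Finset.sum_congr rfl (fun a₁ h₁ => Finset.sum_congr rfl (hstep a₁ h₁))]
  cases α₁ with
  | zero =>
    have hα₂ : α₂ = 0 := Nat.le_zero.mp hle
    subst hα₂
    have e1 : f₁ ^ 2 % 4 = 1 := by have := sq_mod8 f₁ hf₁; omega
    have e2 : f₂ ^ 2 % 4 = 1 := by have := sq_mod8 f₂ hf₂; omega
    have e1' : (1 * f₁ ^ 2) % 2 ^ (0 + 2) = 1 := by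
      rw [one_mul]; exact e1
    have e2' : (1 * f₂ ^ 2) % 2 ^ (0 + 2) = 1 := by
      rw [one_mul]; exact e2
    norm_num [Finset.sum_range_succ, e1', e2', S2fun]
    have hfil : (Finset.filter (fun x => x % 4 = 1 ∧ f₁ ^ 2 % 4 = x * f₂ ^ 2 % 4)
        (Finset.range 4)) = {1} := by
      ext x
      simp only [Finset.mem_filter, Finset.mem_range, Finset.mem_singleton]
      constructor
      · rintro ⟨hx, hx4, -⟩
        omega
      · rintro rfl
        exact ⟨by norm_num, rfl, by rw [one_mul, e1, e2]⟩
    rw [hfil]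
    rfl
  | succ γ =>
    have hS : ∀ a : ℕ, S2fun a (2 ^ (γ + 1)) = if a % 8 = 5 then 2 else 0 := by
      intro a
      unfold S2fun
      rw [if_neg (not_not.mpr (dvd_pow_self 2 (Nat.succ_ne_zero γ)))]
    have main : ∀ a₁ ∈ Finset.range (4 * 2 ^ (γ + 1)),
        (∑ a₂ ∈ Finset.range (4 * 2 ^ α₂),
          (if a₁ % 4 = 1 ∧ a₂ % 4 = 1 ∧
              (a₁ * f₁ ^ 2) % 2 ^ (α₂ + 2) = (a₂ * f₂ ^ 2) % 2 ^ (α₂ + 2) then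
            kron2 (a₁ : ℤ) ^ (γ + 1) * kron2 (a₂ : ℤ) ^ α₂ * S2fun a₁ (2 ^ (γ + 1))
          else 0 : ℤ)) =
        if a₁ % 8 = 5 then 2 * (-1) ^ (γ + 1 + α₂) else 0 := by
      intro a₁ _
      by_cases h5 : a₁ % 8 = 5
      · rw [if_pos h5]
        have hk1 : kron2 (a₁ : ℤ) = -1 := kron2_of_five _ (by omega)
        have h42 : 4 * 2 ^ α₂ = 2 ^ (α₂ + 2) := by rw [pow_add]; ring
        have htrans : ∀ a₂ ∈ Finset.range (4 * 2 ^ α₂),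
            (if a₁ % 4 = 1 ∧ a₂ % 4 = 1 ∧
                (a₁ * f₁ ^ 2) % 2 ^ (α₂ + 2) = (a₂ * f₂ ^ 2) % 2 ^ (α₂ + 2) then
              kron2 (a₁ : ℤ) ^ (γ + 1) * kron2 (a₂ : ℤ) ^ α₂ * S2fun a₁ (2 ^ (γ + 1))
            else 0 : ℤ) =
            ((-1) ^ (γ + 1) * 2) *
              (if a₂ % 4 = 1 ∧
                  (a₁ * f₁ ^ 2) % 2 ^ (α₂ + 2) = (a₂ * f₂ ^ 2) % 2 ^ (α₂ + 2) then
                kron2 (a₂ : ℤ) ^ α₂ else 0) := by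
          intro a₂ _
          by_cases hP : a₂ % 4 = 1 ∧
              (a₁ * f₁ ^ 2) % 2 ^ (α₂ + 2) = (a₂ * f₂ ^ 2) % 2 ^ (α₂ + 2)
          · rw [if_pos ⟨by omega, hP⟩, if_pos hP, hS, if_pos h5, hk1]
            ring
          · rw [if_neg (fun h => hP ⟨h.2.1, h.2.2⟩), if_neg hP, mul_zero]
        rw [Finset.sum_congr rfl htrans, ← Finset.mul_sum, h42,
          innerSumLemma f₁ f₂ a₁ hf₁ hf₂ α₂ h5]
        rw [pow_add]
        ring
      · rw [if_neg h5]
        apply Finset.sum_eq_zero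
        intro a₂ _
        rw [hS, if_neg h5, mul_zero]
        exact ite_self 0
    rw [Finset.sum_congr rfl main, ← Finset.sum_filter,
      show 4 * 2 ^ (γ + 1) = 8 * 2 ^ γ by rw [pow_succ]; ring,
      Finset.sum_const, count58]
    push_cast
    rw [pow_succ]
    ring


lemma kron_pow2 (a : ℤ) (α : ℕ) : kron a (2 ^ α) = kron2 a ^ α := by
  unfold kron
  rw [Nat.Prime.factorization_pow Nat.prime_two]
  simp

lemma fact_two (f α : ℕ) (hf : Odd f) : (4 * 2 ^ α * f ^ 2).factorization 2 = α + 2 := by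
  have h4 : 4 * 2 ^ α = 2 ^ (α + 2) := by rw [pow_add]; ring
  have hf0 : f ≠ 0 := by rintro rfl; simp at hf
  rw [h4, Nat.factorization_mul (by positivity) (by positivity)]
  have h0 : f.factorization 2 = 0 :=
    Nat.factorization_eq_zero_of_not_dvd
      (fun h => not_two_dvd_sq f hf (h.trans (dvd_pow_self f two_ne_zero)))
  simp [h0, Nat.Prime.factorization_pow Nat.prime_two]

lemma erase_empty (α₁ α₂ : ℕ) : ((2 ^ α₁ * 2 ^ α₂ : ℕ).primeFactors.erase 2) = ∅ := by
  rw [Finset.eq_empty_iff_forall_notMem]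
  intro q hq
  obtain ⟨hq2, hq'⟩ := Finset.mem_erase.mp hq
  rw [← pow_add] at hq'
  obtain ⟨hqp, hqd, -⟩ := Nat.mem_primeFactors.mp hq'
  exact hq2 ((Nat.prime_dvd_prime_iff_eq hqp Nat.prime_two).mp (hqp.dvd_of_dvd_pow hqd))


/-- Lemma 3.4 (ii): `C_{p,f}(2^{α₁},2^{α₂}) = 2^{max(α₁,α₂)} (-1)^{α₁+α₂}`. -/
theorem Cpf_at_two (p : ℕ) (hp : p.Prime) (hp2 : p ≠ 2)
    (f₁ f₂ : ℕ) (hf₁ : Odd f₁) (hf₂ : Odd f₂) (hf₁0 : 0 < f₁) (hf₂0 : 0 < f₂)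
    (α₁ α₂ : ℕ) :
    Cpf p f₁ f₂ (2 ^ α₁) (2 ^ α₂) = 2 ^ (max α₁ α₂) * (-1) ^ (α₁ + α₂) := by
  unfold Cpf
  by_cases hle : α₂ ≤ α₁
  · have hsel : ∀ a₁ a₂ : ℕ, sel f₁ f₂ (2 ^ α₁) (2 ^ α₂) a₁ a₂ 2 = (a₁, f₁, 2 ^ α₁) := by
      intro a₁ a₂
      unfold sel
      rw [fact_two f₂ α₂ hf₂, fact_two f₁ α₁ hf₁, if_pos (by omega)]
    have hred : ∀ a₁ a₂ : ℕ,
        (kron (a₁ : ℤ) (2 ^ α₁) * kron (a₂ : ℤ) (2 ^ α₂) *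
          S2fun (sel f₁ f₂ (2 ^ α₁) (2 ^ α₂) a₁ a₂ 2).1
            (sel f₁ f₂ (2 ^ α₁) (2 ^ α₂) a₁ a₂ 2).2.2 *
          ∏ ℓ ∈ ((2 ^ α₁ * 2 ^ α₂ : ℕ).primeFactors.erase 2),
            ((Cpl p ((sel f₁ f₂ (2 ^ α₁) (2 ^ α₂) a₁ a₂ ℓ).1 : ℤ)
                (sel f₁ f₂ (2 ^ α₁) (2 ^ α₂) a₁ a₂ ℓ).2.1
                (sel f₁ f₂ (2 ^ α₁) (2 ^ α₂) a₁ a₂ ℓ).2.2 ℓ : ℤ))) =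
        kron2 (a₁ : ℤ) ^ α₁ * kron2 (a₂ : ℤ) ^ α₂ * S2fun a₁ (2 ^ α₁) := by
      intro a₁ a₂
      rw [erase_empty, Finset.prod_empty, mul_one, kron_pow2, kron_pow2, hsel]
    rw [Finset.sum_congr rfl (fun a₁ _ => Finset.sum_congr rfl
      (fun a₂ _ => if_congr Iff.rfl (hred a₁ a₂) rfl)),
      coreLemma f₁ f₂ hf₁ hf₂ α₁ α₂ hle, Nat.max_eq_left hle]
  · have hlt : α₁ ≤ α₂ := by omega
    have hsel : ∀ a₁ a₂ : ℕ, sel f₁ f₂ (2 ^ α₁) (2 ^ α₂) a₁ a₂ 2 = (a₂, f₂, 2 ^ α₂) := by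
      intro a₁ a₂
      unfold sel
      rw [fact_two f₂ α₂ hf₂, fact_two f₁ α₁ hf₁, if_neg (by omega)]
    have hred : ∀ a₁ a₂ : ℕ,
        (kron (a₁ : ℤ) (2 ^ α₁) * kron (a₂ : ℤ) (2 ^ α₂) *
          S2fun (sel f₁ f₂ (2 ^ α₁) (2 ^ α₂) a₁ a₂ 2).1
            (sel f₁ f₂ (2 ^ α₁) (2 ^ α₂) a₁ a₂ 2).2.2 *
          ∏ ℓ ∈ ((2 ^ α₁ * 2 ^ α₂ : ℕ).primeFactors.erase 2),
            ((Cpl p ((sel f₁ f₂ (2 ^ α₁) (2 ^ α₂) a₁ a₂ ℓ).1 : ℤ)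
                (sel f₁ f₂ (2 ^ α₁) (2 ^ α₂) a₁ a₂ ℓ).2.1
                (sel f₁ f₂ (2 ^ α₁) (2 ^ α₂) a₁ a₂ ℓ).2.2 ℓ : ℤ))) =
        kron2 (a₂ : ℤ) ^ α₂ * kron2 (a₁ : ℤ) ^ α₁ * S2fun a₂ (2 ^ α₂) := by
      intro a₁ a₂
      rw [erase_empty, Finset.prod_empty, mul_one, kron_pow2, kron_pow2, hsel]
      ring
    rw [Finset.sum_congr rfl (fun a₁ _ => Finset.sum_congr rfl
      (fun a₂ _ => if_congr Iff.rfl (hred a₁ a₂) rfl)),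
      Finset.sum_comm]
    have hgc : Nat.gcd (4 * 2 ^ α₁ * f₁ ^ 2) (4 * 2 ^ α₂ * f₂ ^ 2) =
        Nat.gcd (4 * 2 ^ α₂ * f₂ ^ 2) (4 * 2 ^ α₁ * f₁ ^ 2) := Nat.gcd_comm _ _
    have hcg : ∀ a₂ a₁ : ℕ,
        (Nat.Coprime a₁ (4 * 2 ^ α₁) ∧ Nat.Coprime a₂ (4 * 2 ^ α₂) ∧ a₁ % 4 = 1 ∧ a₂ % 4 = 1 ∧
          (a₁ * f₁ ^ 2) % (Nat.gcd (4 * 2 ^ α₁ * f₁ ^ 2) (4 * 2 ^ α₂ * f₂ ^ 2)) =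
            (a₂ * f₂ ^ 2) % (Nat.gcd (4 * 2 ^ α₁ * f₁ ^ 2) (4 * 2 ^ α₂ * f₂ ^ 2))) ↔
        (Nat.Coprime a₂ (4 * 2 ^ α₂) ∧ Nat.Coprime a₁ (4 * 2 ^ α₁) ∧ a₂ % 4 = 1 ∧ a₁ % 4 = 1 ∧
          (a₂ * f₂ ^ 2) % (Nat.gcd (4 * 2 ^ α₂ * f₂ ^ 2) (4 * 2 ^ α₁ * f₁ ^ 2)) =
            (a₁ * f₁ ^ 2) % (Nat.gcd (4 * 2 ^ α₂ * f₂ ^ 2) (4 * 2 ^ α₁ * f₁ ^ 2))) := by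
      intro a₂ a₁
      rw [← hgc]
      constructor
      · rintro ⟨h1, h2, h3, h4, h5⟩
        exact ⟨h2, h1, h4, h3, h5.symm⟩
      · rintro ⟨h1, h2, h3, h4, h5⟩
        exact ⟨h2, h1, h4, h3, h5.symm⟩
    rw [Finset.sum_congr rfl (fun a₂ _ => Finset.sum_congr rfl
      (fun a₁ _ => if_congr (hcg a₂ a₁) rfl rfl)),
      coreLemma f₂ f₁ hf₂ hf₁ α₂ α₁ hlt, Nat.max_eq_right hlt, add_comm α₁ α₂]

end
end

section
/- Let p be an odd prime and f₁, f₂ odd positive integers with p ∤ f₁f₂, and let α₁, α₂ be non-negative integers with max(α₁,α₂) ≥ 1. Then C_{p,f}(p^{α₁}, p^{α₂}) = p^{max(α₁,α₂)−1}·(p−2). -/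
open scoped Classical

noncomputable section

section Helpers
variable {p : ℕ}



lemma fact_two_s13 (hp : p.Prime) (hp2 : p ≠ 2) (k f : ℕ) (hf : Odd f) (hf0 : 0 < f) :
    (4 * p ^ k * f ^ 2).factorization 2 = 2 := by
  have hp0 : p ≠ 0 := hp.ne_zero
  have h4 : (4:ℕ) = 2 ^ 2 := by norm_num
  rw [Nat.factorization_mul (by positivity) (by positivity),
    Nat.factorization_mul (by norm_num) (by positivity), h4,
    Nat.factorization_pow, Nat.factorization_pow]
  have h2p : p.factorization 2 = 0 := by
    apply Nat.factorization_eq_zero_of_not_dvd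
    intro h
    exact hp2 ((Nat.prime_dvd_prime_iff_eq Nat.prime_two hp).mp h).symm
  have h2f : f.factorization 2 = 0 := by
    apply Nat.factorization_eq_zero_of_not_dvd
    intro h
    exact (Nat.not_even_iff_odd.mpr hf) (even_iff_two_dvd.mpr h)
  simp [h2p, h2f, Nat.Prime.factorization_self Nat.prime_two]



lemma odd_pow_odd {f : ℕ} (hf : Odd f) (k : ℕ) : Odd (f ^ k) := hf.pow

lemma fact_p (hp : p.Prime) (hp2 : p ≠ 2) (k : ℕ) {f : ℕ} (hpf : ¬ p ∣ f) (hf0 : 0 < f) :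
    (4 * p ^ k * f ^ 2).factorization p = k := by
  have hp0 : p ≠ 0 := hp.ne_zero
  rw [Nat.factorization_mul (by positivity) (by positivity),
    Nat.factorization_mul (by norm_num) (by positivity),
    Nat.factorization_pow, Nat.factorization_pow]
  have h1 : (4:ℕ).factorization p = 0 := by
    apply Nat.factorization_eq_zero_of_not_dvd
    intro h
    have h4 : (4:ℕ) = 2 ^ 2 := by norm_num
    rw [h4] at h
    exact hp2 ((Nat.prime_dvd_prime_iff_eq hp Nat.prime_two).mp (hp.dvd_of_dvd_pow h))
  have h2 : f.factorization p = 0 := Nat.factorization_eq_zero_of_not_dvd hpf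
  simp [h1, h2, hp.factorization_self]

lemma kron_pow_odd_prime (hp : p.Prime) (hp2 : p ≠ 2) (a : ℤ) (k : ℕ) :
    kron a (p ^ k) = jacobiSym a (p ^ k) := by
  have h : (p ^ k).factorization 2 = 0 := by
    rw [Nat.factorization_pow]
    have : p.factorization 2 = 0 := by
      apply Nat.factorization_eq_zero_of_not_dvd
      intro h
      exact hp2 ((Nat.prime_dvd_prime_iff_eq Nat.prime_two hp).mp h).symm
    simp [this]
  rw [kron, h, pow_zero, pow_zero, one_mul, Nat.div_one]

lemma odd_p_pow (hp : p.Prime) (hp2 : p ≠ 2) (k : ℕ) : Odd (p ^ k) :=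
  (hp.odd_of_ne_two hp2).pow

lemma S2fun_p_pow (hp : p.Prime) (hp2 : p ≠ 2) (a k : ℕ) : S2fun a (p ^ k) = 1 := by
  rw [S2fun, if_pos]
  exact (Nat.not_even_iff_odd.mpr ((hp.odd_of_ne_two hp2).pow)).elim ∘ (even_iff_two_dvd.mpr)

lemma primeFactors_erase (hp : p.Prime) (hp2 : p ≠ 2) {α₁ α₂ : ℕ} (h : 1 ≤ α₁ + α₂) :
    ((p ^ α₁ * p ^ α₂).primeFactors).erase 2 = {p} := by
  rw [← pow_add, Nat.primeFactors_pow _ (by omega), Nat.Prime.primeFactors hp]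
  exact Finset.erase_eq_of_notMem (by simp [hp2.symm])


end Helpers


lemma sum_ite_crt (M : ℕ) (hModd : Odd M) (c D : ℤ)
    (hc : IsCoprime c (M:ℤ)) (hD : IsCoprime D (M:ℤ)) (g : ℕ → ℤ) (v : ℤ)
    (hg : ∀ a : ℕ, a < 4*M → Nat.Coprime a (4*M) → a % 4 = 1 →
      (M:ℤ) ∣ ((a:ℤ)*c - D) → g a = v) :
    (∑ a ∈ Finset.range (4*M),
      if Nat.Coprime a (4*M) ∧ a % 4 = 1 ∧ (M:ℤ) ∣ ((a:ℤ)*c - D) then g a else 0) = v := by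
  have hM0 : 0 < M := hModd.pos
  have h4M : Nat.Coprime 4 M := by
    have h2 : Nat.Coprime 2 M := (Nat.coprime_two_left).mpr hModd
    have h42 : (4:ℕ) = 2^2 := by norm_num
    rw [h42]
    exact h2.pow_left _
  obtain ⟨u, w, huw⟩ := id hc
  set t : ℤ := D * u with ht
  set tn : ℕ := (t % M).toNat with htn
  have htn_cast : (tn : ℤ) = t % M :=
    Int.toNat_of_nonneg (Int.emod_nonneg t (by exact_mod_cast hM0.ne'))
  set a₀ : ℕ := (Nat.chineseRemainder h4M 1 tn : ℕ) with ha₀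
  have ha₀lt : a₀ < 4 * M := Nat.chineseRemainder_lt_mul h4M 1 tn (by norm_num) hM0.ne'
  have ha₀4 : a₀ % 4 = 1 := by
    have := (Nat.chineseRemainder h4M 1 tn).2.1
    simpa [Nat.ModEq] using this
  have ha₀M : a₀ ≡ tn [MOD M] := (Nat.chineseRemainder h4M 1 tn).2.2
  have huc : u * c ≡ 1 [ZMOD (M:ℤ)] := by
    rw [Int.modEq_iff_dvd]
    exact ⟨w, by linarith⟩
  have hdvd : (M:ℤ) ∣ ((a₀:ℤ)*c - D) := by
    have h1 : (a₀:ℤ) ≡ (tn:ℤ) [ZMOD (M:ℤ)] := Int.natCast_modEq_iff.mpr ha₀M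
    have h2 : (tn:ℤ) ≡ t [ZMOD (M:ℤ)] := by
      show (tn:ℤ) % M = t % M
      rw [htn_cast]
      exact Int.emod_emod_of_dvd t dvd_rfl
    have h3 : (a₀:ℤ)*c ≡ t*c [ZMOD (M:ℤ)] := (h1.trans h2).mul_right c
    have h5 : t*c ≡ D [ZMOD (M:ℤ)] := by
      calc t*c = D*(u*c) := by rw [ht]; ring
      _ ≡ D*1 [ZMOD (M:ℤ)] := huc.mul_left D
      _ = D := by ring
    exact Int.ModEq.dvd ((h3.trans h5)).symm
  have ha₀cop : Nat.Coprime a₀ (4*M) := by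
    have h2 : a₀ % 2 = 1 := by omega
    have hcop4 : Nat.Coprime a₀ 4 := by
      have h42 : (4:ℕ) = 2^2 := by norm_num
      rw [h42]
      exact (Nat.coprime_two_right.mpr (Nat.odd_iff.mpr h2)).pow_right _
    have hcopM : Nat.Coprime a₀ M := by
      rw [← Nat.isCoprime_iff_coprime]
      obtain ⟨k, hk⟩ := hdvd
      have : ((a₀:ℤ))*c = D + (M:ℤ)*k := by linarith
      have h6 : IsCoprime ((a₀:ℤ)*c) (M:ℤ) := by
        rw [this]
        exact hD.add_mul_left_left k
      exact h6.of_mul_left_left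
    exact Nat.Coprime.mul_right hcop4 hcopM
  rw [Finset.sum_eq_single_of_mem a₀ (Finset.mem_range.mpr ha₀lt), if_pos ⟨ha₀cop, ha₀4, hdvd⟩]
  · exact hg a₀ ha₀lt ha₀cop ha₀4 hdvd
  · intro b hb hne
    rw [if_neg]
    rintro ⟨hbcop, hb4, hbdvd⟩
    apply hne
    have hmod4 : b ≡ a₀ [MOD 4] := by
      show b % 4 = a₀ % 4
      rw [hb4, ha₀4]
    have hmodM : b ≡ a₀ [MOD M] := by
      rw [Nat.modEq_iff_dvd]
      have hd2 : (M:ℤ) ∣ ((a₀:ℤ) - b) * c := by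
        have := dvd_sub hdvd hbdvd
        have heq : ((a₀:ℤ)*c - D) - ((b:ℤ)*c - D) = ((a₀:ℤ) - b)*c := by ring
        rwa [heq] at this
      exact hc.symm.dvd_of_dvd_mul_right hd2
    exact (Nat.ModEq.eq_of_lt_of_lt
      ((Nat.modEq_and_modEq_iff_modEq_mul h4M).mp ⟨hmod4, hmodM⟩)
      (Finset.mem_range.mp hb) ha₀lt)


lemma card_filter_mod (p n r : ℕ) (hp : 0 < p) (hr : r < p) :
    ((Finset.range (p*n)).filter (fun m => m % p = r)).card = n := by
  conv_rhs => rw [← Finset.card_range n]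
  apply Finset.card_bij' (fun m _ => m / p) (fun q _ => p*q + r)
  · intro m hm
    simp only [Finset.mem_filter, Finset.mem_range] at hm
    simp only [Finset.mem_range]
    obtain ⟨h1, h2⟩ := hm
    have hdm := Nat.div_add_mod m p
    rw [h2] at hdm
    have : p * (m/p) < p * n := by omega
    exact Nat.lt_of_mul_lt_mul_left this
  · intro q hq
    simp only [Finset.mem_range] at hq
    simp only [Finset.mem_filter, Finset.mem_range]
    constructor
    · calc p*q + r < p*q + p := by omega
        _ = p*(q+1) := by ring
        _ ≤ p*n := Nat.mul_le_mul_left p (by omega)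
    · rw [add_comm, Nat.add_mul_mod_self_left, Nat.mod_eq_of_lt hr]
  · intro m hm
    simp only [Finset.mem_filter, Finset.mem_range] at hm
    have hdm := Nat.div_add_mod m p
    omega
  · intro q hq
    rw [add_comm, Nat.add_mul_div_left r q hp, Nat.div_eq_of_lt hr]
    omega

lemma count_good (p : ℕ) (hp : p.Prime) (α : ℕ) (hα : 1 ≤ α) :
    (∑ m ∈ Finset.range (p^α),
      if (¬ (p:ℤ) ∣ (m:ℤ) ∧ ¬ (p:ℤ) ∣ ((m:ℤ) - 1)) then (1:ℤ) else 0)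
    = (p:ℤ)^(α-1) * ((p:ℤ) - 2) := by
  have hp2 : 2 ≤ p := hp.two_le
  have hiff : ∀ m : ℕ, ((¬ (p:ℤ) ∣ (m:ℤ) ∧ ¬ (p:ℤ) ∣ ((m:ℤ) - 1)) ↔ ¬ (m % p = 0 ∨ m % p = 1)) := by
    intro m
    have h1 : (p:ℤ) ∣ (m:ℤ) ↔ m % p = 0 := by
      rw [Int.natCast_dvd_natCast, Nat.dvd_iff_mod_eq_zero]
    have h2 : (p:ℤ) ∣ ((m:ℤ) - 1) ↔ m % p = 1 := by
      constructor
      · intro h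
        have : (1:ℤ) ≡ (m:ℤ) [ZMOD (p:ℤ)] := (Int.modEq_iff_dvd).mpr h
        have h3 : 1 ≡ m [MOD p] := by
          have := this
          exact_mod_cast Int.natCast_modEq_iff.mp (by exact_mod_cast this)
        have := h3.symm
        unfold Nat.ModEq at this
        have h1p : 1 % p = 1 := Nat.mod_eq_of_lt (by omega)
        omega
      · intro h
        have h3 : m ≡ 1 [MOD p] := by
          unfold Nat.ModEq
          have h1p : 1 % p = 1 := Nat.mod_eq_of_lt (by omega)
          omega
        have := Int.natCast_modEq_iff.mpr h3
        have := (Int.modEq_iff_dvd).mp this.symm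
        exact_mod_cast this
    tauto
  rw [Finset.sum_congr rfl (fun m _ => by rw [if_congr (hiff m) rfl rfl])]
  rw [Finset.sum_boole]
  have hsplit : (Finset.range (p^α)).filter (fun m => ¬ (m % p = 0 ∨ m % p = 1))
      = Finset.range (p^α) \ ((Finset.range (p^α)).filter (fun m => m % p = 0 ∨ m % p = 1)) := by
    rw [← Finset.filter_not]
  have hpow : p ^ α = p * p ^ (α - 1) := by
    conv_lhs => rw [show α = 1 + (α - 1) by omega, pow_add, pow_one]
  have hA : ((Finset.range (p^α)).filter (fun m => m % p = 0)).card = p^(α-1) := by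
    rw [hpow]; exact card_filter_mod p _ 0 (by omega) (by omega)
  have hB : ((Finset.range (p^α)).filter (fun m => m % p = 1)).card = p^(α-1) := by
    rw [hpow]; exact card_filter_mod p _ 1 (by omega) (by omega)
  have hunion : ((Finset.range (p^α)).filter (fun m => m % p = 0 ∨ m % p = 1)).card
      = p^(α-1) + p^(α-1) := by
    rw [Finset.filter_or, Finset.card_union_of_disjoint, hA, hB]
    rw [Finset.disjoint_filter]
    intro m _ h0 h1
    omega
  rw [hsplit, Finset.card_sdiff_of_subset (Finset.filter_subset _ _), Finset.card_range, hunion]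
  have hle : p^(α-1) + p^(α-1) ≤ p^α := by
    rw [hpow]
    have : 2 * p^(α-1) ≤ p * p^(α-1) := Nat.mul_le_mul_right _ hp2
    omega
  push_cast [hle]
  have hcast : (p:ℤ)^α = (p:ℤ) * (p:ℤ)^(α-1) := by exact_mod_cast congrArg (Nat.cast : ℕ → ℤ) hpow
  rw [hcast]
  ring


lemma gcd_eq_aux {p f₁ f₂ : ℕ} (hpf₁ : ¬ p ∣ f₂) {α₁ α₂ : ℕ} (h21 : α₂ ≤ α₁) (hp : p.Prime) :
    Nat.gcd (4 * p ^ α₁ * f₁ ^ 2) (4 * p ^ α₂ * f₂ ^ 2)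
      = 4 * (p ^ α₂ * Nat.gcd (f₁ ^ 2) (f₂ ^ 2)) := by
  rw [mul_assoc, mul_assoc, Nat.gcd_mul_left]
  congr 1
  have hsplit : p ^ α₁ = p ^ α₂ * p ^ (α₁ - α₂) := by
    rw [← pow_add]; congr 1; omega
  rw [hsplit, mul_assoc, Nat.gcd_mul_left]
  congr 1
  have hco : Nat.Coprime (p ^ (α₁ - α₂)) (f₂ ^ 2) :=
    ((hp.coprime_iff_not_dvd.mpr hpf₁).pow_left _).pow_right _
  exact hco.gcd_mul_left_cancel _

lemma link_iff {p : ℕ} (hp : p.Prime) (hp2 : p ≠ 2) {f₁ f₂ : ℕ} (hf₁ : Odd f₁) (hf₂ : Odd f₂)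
    (hpf₁ : ¬ p ∣ f₁) (hpf₂ : ¬ p ∣ f₂) {α₁ α₂ : ℕ} (h21 : α₂ ≤ α₁)
    {a₁ a₂ : ℕ} (ha₁ : a₁ % 4 = 1) (ha₂ : a₂ % 4 = 1) :
    ((a₁ * f₁ ^ 2) % (Nat.gcd (4 * p ^ α₁ * f₁ ^ 2) (4 * p ^ α₂ * f₂ ^ 2)) =
      (a₂ * f₂ ^ 2) % (Nat.gcd (4 * p ^ α₁ * f₁ ^ 2) (4 * p ^ α₂ * f₂ ^ 2)))
    ↔ ((p:ℤ) ^ α₂ ∣ ((a₂:ℤ) * (f₂:ℤ) ^ 2 - (a₁:ℤ) * (f₁:ℤ) ^ 2)) := by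
  set g := Nat.gcd (4 * p ^ α₁ * f₁ ^ 2) (4 * p ^ α₂ * f₂ ^ 2) with hg
  set G := Nat.gcd (f₁ ^ 2) (f₂ ^ 2) with hG
  have hgeq : g = 4 * (p ^ α₂ * G) := gcd_eq_aux hpf₂ h21 hp
  have hmod : ((a₁ * f₁ ^ 2) % g = (a₂ * f₂ ^ 2) % g) ↔ (a₁ * f₁ ^ 2) ≡ (a₂ * f₂ ^ 2) [MOD g] :=
    Iff.rfl
  rw [hmod, Nat.modEq_iff_dvd]
  have hX : ((a₂ * f₂ ^ 2 : ℕ) : ℤ) - ((a₁ * f₁ ^ 2 : ℕ) : ℤ)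
      = ((a₂:ℤ) * (f₂:ℤ) ^ 2 - (a₁:ℤ) * (f₁:ℤ) ^ 2) := by push_cast; ring
  rw [hX]
  set X : ℤ := ((a₂:ℤ) * (f₂:ℤ) ^ 2 - (a₁:ℤ) * (f₁:ℤ) ^ 2) with hXdef
  constructor
  · intro h
    have hdvdg : (p:ℕ) ^ α₂ ∣ g := by
      rw [hgeq]
      exact Dvd.dvd.mul_left (dvd_mul_right _ _) 4
    have : ((p ^ α₂ : ℕ) : ℤ) ∣ X := dvd_trans (Int.natCast_dvd_natCast.mpr hdvdg) h
    exact_mod_cast this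
  · intro h
    rw [Int.natCast_dvd]
    have h4 : (4:ℕ) ∣ X.natAbs := by
      rw [← Int.natCast_dvd]
      obtain ⟨k₁, hk₁⟩ := hf₁
      obtain ⟨k₂, hk₂⟩ := hf₂
      have d1 : (4:ℤ) ∣ (f₁:ℤ) ^ 2 - 1 := ⟨k₁^2 + k₁, by push_cast [hk₁]; ring⟩
      have d2 : (4:ℤ) ∣ (f₂:ℤ) ^ 2 - 1 := ⟨k₂^2 + k₂, by push_cast [hk₂]; ring⟩
      have e1 : (4:ℤ) ∣ (a₁:ℤ) - 1 := by
        have : (a₁:ℤ) = 4 * ((a₁ / 4 : ℕ) : ℤ) + 1 := by exact_mod_cast (by omega : a₁ = 4 * (a₁ / 4) + 1)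
        exact ⟨((a₁ / 4 : ℕ) : ℤ), by omega⟩
      have e2 : (4:ℤ) ∣ (a₂:ℤ) - 1 := by
        have : (a₂:ℤ) = 4 * ((a₂ / 4 : ℕ) : ℤ) + 1 := by exact_mod_cast (by omega : a₂ = 4 * (a₂ / 4) + 1)
        exact ⟨((a₂ / 4 : ℕ) : ℤ), by omega⟩
      have hXeq : X = ((a₂:ℤ) * ((f₂:ℤ)^2 - 1) + ((a₂:ℤ) - 1))
          - ((a₁:ℤ) * ((f₁:ℤ)^2 - 1) + ((a₁:ℤ) - 1)) := by rw [hXdef]; ring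
      rw [hXeq]
      exact dvd_sub (dvd_add (d2.mul_left _) e2) (dvd_add (d1.mul_left _) e1)
    have hpdvd : (p:ℕ) ^ α₂ ∣ X.natAbs := by
      rw [← Int.natCast_dvd]
      exact_mod_cast h
    have hGdvd : G ∣ X.natAbs := by
      rw [← Int.natCast_dvd]
      have hG1 : (G:ℤ) ∣ (a₂:ℤ) * (f₂:ℤ) ^ 2 := by
        have : (G:ℤ) ∣ ((f₂:ℤ)) ^ 2 := by exact_mod_cast Int.natCast_dvd_natCast.mpr (Nat.gcd_dvd_right _ _)
        exact this.mul_left _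
      have hG2 : (G:ℤ) ∣ (a₁:ℤ) * (f₁:ℤ) ^ 2 := by
        have : (G:ℤ) ∣ ((f₁:ℤ)) ^ 2 := by exact_mod_cast Int.natCast_dvd_natCast.mpr (Nat.gcd_dvd_left _ _)
        exact this.mul_left _
      exact dvd_sub hG1 hG2
    -- coprimalities
    have hpodd : Odd p := hp.odd_of_ne_two hp2
    have hGodd : Odd G := by
      rcases Nat.even_or_odd G with hev | hodd
      · exfalso
        have : (2:ℕ) ∣ f₁ ^ 2 := dvd_trans hev.two_dvd (Nat.gcd_dvd_left _ _)
        have h2f : (2:ℕ) ∣ f₁ := Nat.Prime.dvd_of_dvd_pow Nat.prime_two this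
        rw [Nat.odd_iff] at hf₁
        omega
      · exact hodd
    have co24 : Nat.Coprime 4 (p ^ α₂) := by
      have : Nat.Coprime 2 p := Nat.coprime_two_left.mpr hpodd
      have h42 : (4:ℕ) = 2 ^ 2 := by norm_num
      rw [h42]
      exact this.pow (m := 2) (n := α₂)
    have co4G : Nat.Coprime 4 G := by
      have : Nat.Coprime 2 G := Nat.coprime_two_left.mpr hGodd
      have h42 : (4:ℕ) = 2 ^ 2 := by norm_num
      rw [h42]
      exact this.pow_left _
    have copG : Nat.Coprime (p ^ α₂) G := by
      have hpG : Nat.Coprime p G := by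
        have : Nat.Coprime p (f₂ ^ 2) := (hp.coprime_iff_not_dvd.mpr hpf₂).pow_right _
        exact Nat.Coprime.coprime_dvd_right (Nat.gcd_dvd_right _ _) this
      exact hpG.pow_left _
    rw [hgeq]
    have cototal : Nat.Coprime 4 (p ^ α₂ * G) := Nat.Coprime.mul_right co24 co4G
    have hpg : (p ^ α₂ * G) ∣ X.natAbs := Nat.Coprime.mul_dvd_of_dvd_of_dvd copG hpdvd hGdvd
    exact Nat.Coprime.mul_dvd_of_dvd_of_dvd cototal h4 hpg

/-- Reduced form of `Cpf` at prime powers of `p`. -/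
def Tsum (p f₁ f₂ α₁ α₂ : ℕ) : ℤ :=
  ∑ a₁ ∈ Finset.range (4 * p ^ α₁), ∑ a₂ ∈ Finset.range (4 * p ^ α₂),
    if Nat.Coprime a₁ (4 * p ^ α₁) ∧ Nat.Coprime a₂ (4 * p ^ α₂) ∧ a₁ % 4 = 1 ∧ a₂ % 4 = 1 ∧
        (a₁ * f₁ ^ 2) % (Nat.gcd (4 * p ^ α₁ * f₁ ^ 2) (4 * p ^ α₂ * f₂ ^ 2)) =
          (a₂ * f₂ ^ 2) % (Nat.gcd (4 * p ^ α₁ * f₁ ^ 2) (4 * p ^ α₂ * f₂ ^ 2)) then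
      jacobiSym (a₁ : ℤ) (p ^ α₁) * jacobiSym (a₂ : ℤ) (p ^ α₂) *
        (Cpl p (a₁ : ℤ) f₁ (p ^ α₁) p : ℤ)
    else 0

lemma Cpl_expand {p : ℕ} (hp : p.Prime) (hp2 : p ≠ 2) {f : ℕ} (hpf : ¬ p ∣ f) (hf0 : 0 < f)
    (a : ℤ) (α : ℕ) :
    (Cpl p a f (p ^ α) p : ℤ) = ∑ m ∈ Finset.range (p ^ α),
      if Nat.Coprime m (p ^ α) ∧ (p:ℤ) ^ α ∣ (Dfun (p:ℤ) (m:ℤ) - a * (f:ℤ) ^ 2)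
      then (1:ℤ) else 0 := by
  rw [Cpl, fact_p hp hp2 α hpf hf0, Finset.card_filter]
  push_cast
  rfl

lemma Cpf_eq_Tsum_left {p : ℕ} (hp : p.Prime) (hp2 : p ≠ 2) {f₁ f₂ : ℕ}
    (hf₁ : Odd f₁) (hf₂ : Odd f₂) (hf₁0 : 0 < f₁) (hf₂0 : 0 < f₂)
    (hpf₁ : ¬ p ∣ f₁) (hpf₂ : ¬ p ∣ f₂) {α₁ α₂ : ℕ} (hα : 1 ≤ α₁ + α₂) (h21 : α₂ ≤ α₁) :
    Cpf p f₁ f₂ (p ^ α₁) (p ^ α₂) = Tsum p f₁ f₂ α₁ α₂ := by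
  rw [Cpf, Tsum]
  apply Finset.sum_congr rfl
  intro a₁ _
  apply Finset.sum_congr rfl
  intro a₂ _
  apply if_congr Iff.rfl _ rfl
  have hsel2 : sel f₁ f₂ (p ^ α₁) (p ^ α₂) a₁ a₂ 2 = (a₁, f₁, p ^ α₁) := by
    rw [sel, if_pos]
    rw [fact_two_s13 hp hp2 α₁ f₁ hf₁ hf₁0, fact_two_s13 hp hp2 α₂ f₂ hf₂ hf₂0]
  have hselp : sel f₁ f₂ (p ^ α₁) (p ^ α₂) a₁ a₂ p = (a₁, f₁, p ^ α₁) := by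
    rw [sel, if_pos]
    rw [fact_p hp hp2 α₁ hpf₁ hf₁0, fact_p hp hp2 α₂ hpf₂ hf₂0]
    exact h21
  rw [hsel2, primeFactors_erase hp hp2 hα, Finset.prod_singleton, hselp,
    kron_pow_odd_prime hp hp2, kron_pow_odd_prime hp hp2]
  simp only [S2fun_p_pow hp hp2]
  ring

lemma Cpf_eq_Tsum_right {p : ℕ} (hp : p.Prime) (hp2 : p ≠ 2) {f₁ f₂ : ℕ}
    (hf₁ : Odd f₁) (hf₂ : Odd f₂) (hf₁0 : 0 < f₁) (hf₂0 : 0 < f₂)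
    (hpf₁ : ¬ p ∣ f₁) (hpf₂ : ¬ p ∣ f₂) {α₁ α₂ : ℕ} (h12 : α₁ < α₂) :
    Cpf p f₁ f₂ (p ^ α₁) (p ^ α₂) = Tsum p f₂ f₁ α₂ α₁ := by
  rw [Cpf, Tsum, Finset.sum_comm]
  apply Finset.sum_congr rfl
  intro a₂ _
  apply Finset.sum_congr rfl
  intro a₁ _
  have hgcd : Nat.gcd (4 * p ^ α₁ * f₁ ^ 2) (4 * p ^ α₂ * f₂ ^ 2)
      = Nat.gcd (4 * p ^ α₂ * f₂ ^ 2) (4 * p ^ α₁ * f₁ ^ 2) := Nat.gcd_comm _ _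
  apply if_congr
  · rw [hgcd]
    constructor
    · rintro ⟨h1, h2, h3, h4, h5⟩; exact ⟨h2, h1, h4, h3, h5.symm⟩
    · rintro ⟨h1, h2, h3, h4, h5⟩; exact ⟨h2, h1, h4, h3, h5.symm⟩
  · have hα : 1 ≤ α₁ + α₂ := by omega
    have hsel2 : sel f₁ f₂ (p ^ α₁) (p ^ α₂) a₁ a₂ 2 = (a₁, f₁, p ^ α₁) := by
      rw [sel, if_pos]
      rw [fact_two_s13 hp hp2 α₁ f₁ hf₁ hf₁0, fact_two_s13 hp hp2 α₂ f₂ hf₂ hf₂0]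
    have hselp : sel f₁ f₂ (p ^ α₁) (p ^ α₂) a₁ a₂ p = (a₂, f₂, p ^ α₂) := by
      rw [sel, if_neg]
      rw [fact_p hp hp2 α₁ hpf₁ hf₁0, fact_p hp hp2 α₂ hpf₂ hf₂0]
      omega
    rw [hsel2, primeFactors_erase hp hp2 hα, Finset.prod_singleton, hselp,
      kron_pow_odd_prime hp hp2, kron_pow_odd_prime hp hp2]
    simp only [S2fun_p_pow hp hp2]
    ring
  · rfl

lemma Tsum_eval {p : ℕ} (hp : p.Prime) (hp2 : p ≠ 2) {f₁ f₂ : ℕ}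
    (hf₁ : Odd f₁) (hf₂ : Odd f₂) (hf₁0 : 0 < f₁) (hf₂0 : 0 < f₂)
    (hpf₁ : ¬ p ∣ f₁) (hpf₂ : ¬ p ∣ f₂) {α₁ α₂ : ℕ} (hα₁ : 1 ≤ α₁) (h21 : α₂ ≤ α₁) :
    Tsum p f₁ f₂ α₁ α₂ = (p:ℤ) ^ (α₁ - 1) * ((p:ℤ) - 2) := by
  have hpodd : Odd p := hp.odd_of_ne_two hp2
  have hpoddpow : Odd (p ^ α₂) := hpodd.pow
  have hco4p : ∀ a : ℕ, Nat.Coprime a (4 * p ^ α₁) → Nat.Coprime a p := by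
    intro a h
    have h1 : Nat.Coprime a (p ^ α₁) := Nat.Coprime.coprime_dvd_right (Dvd.intro_left 4 rfl) h
    exact Nat.Coprime.coprime_dvd_right (dvd_pow_self p (by omega)) h1
  have hgcdf₁ : ∀ k : ℕ, Int.gcd (f₁ : ℤ) ((p ^ k : ℕ) : ℤ) = 1 := by
    intro k
    rw [Int.gcd_natCast_natCast]
    exact Nat.Coprime.pow_right k ((hp.coprime_iff_not_dvd.mpr hpf₁).symm)
  have hgcdf₂ : ∀ k : ℕ, Int.gcd (f₂ : ℤ) ((p ^ k : ℕ) : ℤ) = 1 := by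
    intro k
    rw [Int.gcd_natCast_natCast]
    exact Nat.Coprime.pow_right k ((hp.coprime_iff_not_dvd.mpr hpf₂).symm)
  -- Step A : collapse the a₂ sum
  have stepA : Tsum p f₁ f₂ α₁ α₂ = ∑ a₁ ∈ Finset.range (4 * p ^ α₁),
      if Nat.Coprime a₁ (4 * p ^ α₁) ∧ a₁ % 4 = 1 then
        jacobiSym (a₁ : ℤ) (p ^ α₁) * jacobiSym (a₁ : ℤ) (p ^ α₂) *
          (Cpl p (a₁ : ℤ) f₁ (p ^ α₁) p : ℤ)
      else 0 := by
    rw [Tsum]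
    apply Finset.sum_congr rfl
    intro a₁ _
    by_cases hA : Nat.Coprime a₁ (4 * p ^ α₁) ∧ a₁ % 4 = 1
    · rw [if_pos hA]
      have hstep : ∀ a₂ ∈ Finset.range (4 * p ^ α₂),
          (if Nat.Coprime a₁ (4 * p ^ α₁) ∧ Nat.Coprime a₂ (4 * p ^ α₂) ∧ a₁ % 4 = 1 ∧
              a₂ % 4 = 1 ∧
              (a₁ * f₁ ^ 2) % (Nat.gcd (4 * p ^ α₁ * f₁ ^ 2) (4 * p ^ α₂ * f₂ ^ 2)) =
                (a₂ * f₂ ^ 2) % (Nat.gcd (4 * p ^ α₁ * f₁ ^ 2) (4 * p ^ α₂ * f₂ ^ 2)) then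
            jacobiSym (a₁ : ℤ) (p ^ α₁) * jacobiSym (a₂ : ℤ) (p ^ α₂) *
              (Cpl p (a₁ : ℤ) f₁ (p ^ α₁) p : ℤ)
          else 0)
          = (if Nat.Coprime a₂ (4 * p ^ α₂) ∧ a₂ % 4 = 1 ∧
              ((p ^ α₂ : ℕ) : ℤ) ∣ ((a₂:ℤ) * ((f₂:ℤ) ^ 2) - ((a₁:ℤ) * (f₁:ℤ) ^ 2)) then
            (jacobiSym (a₁ : ℤ) (p ^ α₁) * (Cpl p (a₁ : ℤ) f₁ (p ^ α₁) p : ℤ)) *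
              jacobiSym (a₂ : ℤ) (p ^ α₂)
          else 0) := by
        intro a₂ _
        apply if_congr _ (by ring) rfl
        have hcast : ((p ^ α₂ : ℕ) : ℤ) = (p:ℤ) ^ α₂ := by push_cast; rfl
        constructor
        · rintro ⟨h1, h2, h3, h4, h5⟩
          refine ⟨h2, h4, ?_⟩
          rw [hcast]
          exact (link_iff hp hp2 hf₁ hf₂ hpf₁ hpf₂ h21 h3 h4).mp h5
        · rintro ⟨h1, h2, h3⟩
          rw [hcast] at h3
          exact ⟨hA.1, h1, hA.2, h2,
            (link_iff hp hp2 hf₁ hf₂ hpf₁ hpf₂ h21 hA.2 h2).mpr h3⟩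
      rw [Finset.sum_congr rfl hstep]
      rw [sum_ite_crt (p ^ α₂) hpoddpow ((f₂:ℤ) ^ 2) ((a₁:ℤ) * (f₁:ℤ) ^ 2)
        (IsCoprime.pow_left (Nat.isCoprime_iff_coprime.mpr
          ((hp.coprime_iff_not_dvd.mpr hpf₂).symm.pow_right _)))
        (IsCoprime.mul_left
          (Nat.isCoprime_iff_coprime.mpr ((hco4p a₁ hA.1).pow_right _))
          (IsCoprime.pow_left (Nat.isCoprime_iff_coprime.mpr
            ((hp.coprime_iff_not_dvd.mpr hpf₁).symm.pow_right _))))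
        _ ((jacobiSym (a₁ : ℤ) (p ^ α₁) * (Cpl p (a₁ : ℤ) f₁ (p ^ α₁) p : ℤ)) *
            jacobiSym (a₁ : ℤ) (p ^ α₂))]
      · ring
      · intro a₂ _ _ _ hdvd
        congr 1
        -- J(a₂ | p^α₂) = J(a₁ | p^α₂)
        have hmod : ((a₁:ℤ) * (f₁:ℤ) ^ 2) % ((p ^ α₂ : ℕ) : ℤ)
            = ((a₂:ℤ) * (f₂:ℤ) ^ 2) % ((p ^ α₂ : ℕ) : ℤ) :=
          Int.modEq_iff_dvd.mpr hdvd
        have hj := jacobiSym.mod_left' hmod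
        rw [jacobiSym.mul_left, jacobiSym.mul_left,
          jacobiSym.sq_one' (hgcdf₁ α₂), jacobiSym.sq_one' (hgcdf₂ α₂),
          mul_one, mul_one] at hj
        exact hj.symm
    · rw [if_neg hA]
      apply Finset.sum_eq_zero
      intro a₂ _
      rw [if_neg]
      rintro ⟨h1, h2, h3, h4, h5⟩
      exact hA ⟨h1, h3⟩
  rw [stepA]
  -- Step B : expand Cpl and push inside
  have stepB : (∑ a₁ ∈ Finset.range (4 * p ^ α₁),
      if Nat.Coprime a₁ (4 * p ^ α₁) ∧ a₁ % 4 = 1 then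
        jacobiSym (a₁ : ℤ) (p ^ α₁) * jacobiSym (a₁ : ℤ) (p ^ α₂) *
          (Cpl p (a₁ : ℤ) f₁ (p ^ α₁) p : ℤ)
      else 0)
      = ∑ m ∈ Finset.range (p ^ α₁), ∑ a₁ ∈ Finset.range (4 * p ^ α₁),
        if (Nat.Coprime a₁ (4 * p ^ α₁) ∧ a₁ % 4 = 1) ∧
            (Nat.Coprime m (p ^ α₁) ∧
              (p:ℤ) ^ α₁ ∣ (Dfun (p:ℤ) (m:ℤ) - (a₁:ℤ) * (f₁:ℤ) ^ 2)) then
          jacobiSym (a₁ : ℤ) (p ^ α₁) * jacobiSym (a₁ : ℤ) (p ^ α₂)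
        else 0 := by
    rw [Finset.sum_comm]
    apply Finset.sum_congr rfl
    intro a₁ _
    by_cases hA : Nat.Coprime a₁ (4 * p ^ α₁) ∧ a₁ % 4 = 1
    · rw [if_pos hA, Cpl_expand hp hp2 hpf₁ hf₁0, Finset.mul_sum]
      apply Finset.sum_congr rfl
      intro m _
      rw [mul_ite, mul_one, mul_zero, if_congr (and_iff_right hA).symm rfl rfl]
    · rw [if_neg hA]
      symm
      apply Finset.sum_eq_zero
      intro m _
      exact if_neg (fun h => hA h.1)
  rw [stepB]
  -- Step C : evaluate for each m
  have stepC : ∀ m ∈ Finset.range (p ^ α₁),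
      (∑ a₁ ∈ Finset.range (4 * p ^ α₁),
        if (Nat.Coprime a₁ (4 * p ^ α₁) ∧ a₁ % 4 = 1) ∧
            (Nat.Coprime m (p ^ α₁) ∧
              (p:ℤ) ^ α₁ ∣ (Dfun (p:ℤ) (m:ℤ) - (a₁:ℤ) * (f₁:ℤ) ^ 2)) then
          jacobiSym (a₁ : ℤ) (p ^ α₁) * jacobiSym (a₁ : ℤ) (p ^ α₂)
        else 0)
      = if (¬ (p:ℤ) ∣ (m:ℤ) ∧ ¬ (p:ℤ) ∣ ((m:ℤ) - 1)) then (1:ℤ) else 0 := by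
    intro m _
    have hpInt : Prime ((p:ℤ)) := Int.prime_iff_natAbs_prime.mpr (by simpa using hp)
    have hDm : Dfun (p:ℤ) (m:ℤ) - ((m:ℤ) - 1) ^ 2 = (p:ℤ) * ((p:ℤ) - 2 * (m:ℤ) - 2) := by
      rw [Dfun]; ring
    by_cases hgood : (¬ (p:ℤ) ∣ (m:ℤ) ∧ ¬ (p:ℤ) ∣ ((m:ℤ) - 1))
    · rw [if_pos hgood]
      have hDunit : ¬ (p:ℤ) ∣ Dfun (p:ℤ) (m:ℤ) := by
        intro h
        have h2 : (p:ℤ) ∣ (p:ℤ) * ((p:ℤ) - 2 * (m:ℤ) - 2) := Dvd.intro _ rfl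
        have h1 : (p:ℤ) ∣ ((m:ℤ) - 1) ^ 2 := by
          have heq : ((m:ℤ) - 1) ^ 2
              = Dfun (p:ℤ) (m:ℤ) - (p:ℤ) * ((p:ℤ) - 2 * (m:ℤ) - 2) := by
            rw [Dfun]; ring
          rw [heq]
          exact dvd_sub h h2
        exact hgood.2 (hpInt.dvd_of_dvd_pow h1)
      have hcast : ((p ^ α₁ : ℕ) : ℤ) = (p:ℤ) ^ α₁ := by push_cast; rfl
      have hcopm : Nat.Coprime m (p ^ α₁) := by
        have hpm : ¬ p ∣ m := by
          intro h
          exact hgood.1 (Int.natCast_dvd_natCast.mpr h)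
        exact ((hp.coprime_iff_not_dvd.mpr hpm).symm).pow_right _
      have hiff : ∀ a₁ : ℕ,
          ((Nat.Coprime a₁ (4 * p ^ α₁) ∧ a₁ % 4 = 1) ∧
            (Nat.Coprime m (p ^ α₁) ∧
              (p:ℤ) ^ α₁ ∣ (Dfun (p:ℤ) (m:ℤ) - (a₁:ℤ) * (f₁:ℤ) ^ 2)))
          ↔ (Nat.Coprime a₁ (4 * p ^ α₁) ∧ a₁ % 4 = 1 ∧
              ((p ^ α₁ : ℕ) : ℤ) ∣ ((a₁:ℤ) * ((f₁:ℤ) ^ 2) - Dfun (p:ℤ) (m:ℤ))) := by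
        intro a₁
        rw [hcast]
        constructor
        · rintro ⟨⟨h1, h2⟩, _, h4⟩
          exact ⟨h1, h2, dvd_sub_comm.mp h4⟩
        · rintro ⟨h1, h2, h3⟩
          exact ⟨⟨h1, h2⟩, hcopm, dvd_sub_comm.mp h3⟩
      rw [Finset.sum_congr rfl (fun a₁ _ => if_congr (hiff a₁) rfl rfl)]
      apply sum_ite_crt (p ^ α₁) hpodd.pow ((f₁:ℤ) ^ 2) (Dfun (p:ℤ) (m:ℤ))
        (IsCoprime.pow_left (Nat.isCoprime_iff_coprime.mpr
          ((hp.coprime_iff_not_dvd.mpr hpf₁).symm.pow_right _)))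
        (by
          rw [hcast]
          exact ((hpInt.coprime_iff_not_dvd.mpr hDunit).symm).pow_right)
      intro a₁ _ hcop ha₁4 hdvd
      -- show J(a₁ | p^α₁) * J(a₁ | p^α₂) = 1
      have hα₁0 : α₁ ≠ 0 := by omega
      have hpdvd1 : (p:ℤ) ∣ ((a₁:ℤ) * (f₁:ℤ) ^ 2 - Dfun (p:ℤ) (m:ℤ)) := by
        refine dvd_trans ?_ hdvd
        exact_mod_cast Int.natCast_dvd_natCast.mpr (dvd_pow_self p hα₁0)
      have hj1 : jacobiSym ((a₁:ℤ) * (f₁:ℤ) ^ 2) p = jacobiSym (Dfun (p:ℤ) (m:ℤ)) p := by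
        apply jacobiSym.mod_left'
        exact Int.modEq_iff_dvd.mpr (dvd_sub_comm.mp hpdvd1)
      have hj2 : jacobiSym (Dfun (p:ℤ) (m:ℤ)) p = jacobiSym (((m:ℤ) - 1) ^ 2) p := by
        apply jacobiSym.mod_left'
        symm
        apply Int.modEq_iff_dvd.mpr
        have : Dfun (p:ℤ) (m:ℤ) - ((m:ℤ) - 1) ^ 2 = (p:ℤ) * ((p:ℤ) - 2 * (m:ℤ) - 2) := by
          rw [Dfun]; ring
        exact this ▸ Dvd.intro _ rfl
      have hgcdm : Int.gcd ((m:ℤ) - 1) (p : ℕ) = 1 := by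
        have : IsCoprime ((m:ℤ) - 1) ((p:ℤ)) := ((hpInt.coprime_iff_not_dvd.mpr hgood.2)).symm
        exact_mod_cast Int.isCoprime_iff_gcd_eq_one.mp this
      have hgcdf₁' : Int.gcd ((f₁:ℤ)) (p : ℕ) = 1 := by
        rw [Int.gcd_natCast_natCast]
        exact hp.coprime_iff_not_dvd.mpr hpf₁ |>.symm
      have hj3 : jacobiSym (((m:ℤ) - 1) ^ 2) p = 1 := jacobiSym.sq_one' hgcdm
      have hja : jacobiSym (a₁ : ℤ) p = 1 := by
        rw [jacobiSym.mul_left, jacobiSym.sq_one' hgcdf₁', mul_one] at hj1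
        rw [hj1, hj2, hj3]
      rw [jacobiSym.pow_right, jacobiSym.pow_right, hja, one_pow, one_pow, one_mul]
    · rw [if_neg hgood]
      apply Finset.sum_eq_zero
      intro a₁ _
      rw [if_neg]
      rintro ⟨⟨hC, hm4⟩, hQ1, hQ2⟩
      apply hgood
      have hpm : ¬ (p:ℤ) ∣ (m:ℤ) := by
        rw [Int.natCast_dvd_natCast]
        intro h
        have hd : p ∣ Nat.gcd m (p ^ α₁) := Nat.dvd_gcd h (dvd_pow_self p (by omega))
        rw [hQ1] at hd
        exact hp.one_lt.ne' (Nat.dvd_one.mp hd)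
      constructor
      · exact hpm
      · intro hdvd1
        -- p ∣ m - 1 ⇒ p ∣ Dfun ⇒ p ∣ a₁ f₁², contradiction
        have hpD : (p:ℤ) ∣ Dfun (p:ℤ) (m:ℤ) := by
          have h2 : (p:ℤ) ∣ ((m:ℤ) - 1) ^ 2 := hdvd1.pow (by norm_num)
          have h3 : (p:ℤ) ∣ (p:ℤ) * ((p:ℤ) - 2 * (m:ℤ) - 2) := Dvd.intro _ rfl
          have := dvd_add h3 h2
          rwa [← hDm, sub_add_cancel] at this
        have hpα : (p:ℤ) ∣ (p:ℤ) ^ α₁ := dvd_pow_self _ (by omega)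
        have h4 : (p:ℤ) ∣ ((a₁:ℤ) * (f₁:ℤ) ^ 2) := by
          have h5 := dvd_sub hpD (dvd_trans hpα hQ2)
          have h6 : Dfun (p:ℤ) (m:ℤ) - (Dfun (p:ℤ) (m:ℤ) - (a₁:ℤ) * (f₁:ℤ) ^ 2)
              = (a₁:ℤ) * (f₁:ℤ) ^ 2 := by ring
          rwa [h6] at h5
        rcases hpInt.dvd_mul.mp h4 with h | h
        · rw [Int.natCast_dvd_natCast] at h
          exact (hp.coprime_iff_not_dvd.mp ((hco4p a₁ hC).symm)) h
        · have := hpInt.dvd_of_dvd_pow h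
          rw [Int.natCast_dvd_natCast] at this
          exact hpf₁ this
  rw [Finset.sum_congr rfl stepC]
  exact count_good p hp α₁ hα₁

/-- Lemma 3.4 (iii): if `p ∤ f₁f₂` then
`C_{p,f}(p^{α₁},p^{α₂}) = p^{max(α₁,α₂)-1}(p-2)`. -/
theorem Cpf_at_p (p : ℕ) (hp : p.Prime) (hp2 : p ≠ 2)
    (f₁ f₂ : ℕ) (hf₁ : Odd f₁) (hf₂ : Odd f₂) (hf₁0 : 0 < f₁) (hf₂0 : 0 < f₂)
    (hpf : ¬ p ∣ f₁ * f₂) (α₁ α₂ : ℕ) (hα : 1 ≤ max α₁ α₂) :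
    Cpf p f₁ f₂ (p ^ α₁) (p ^ α₂) = (p : ℤ) ^ (max α₁ α₂ - 1) * ((p : ℤ) - 2) := by
  have hpf₁ : ¬ p ∣ f₁ := fun h => hpf (h.mul_right f₂)
  have hpf₂ : ¬ p ∣ f₂ := fun h => hpf (h.mul_left f₁)
  rcases le_or_gt α₂ α₁ with h | h
  · rw [max_eq_left h] at hα ⊢
    rw [Cpf_eq_Tsum_left hp hp2 hf₁ hf₂ hf₁0 hf₂0 hpf₁ hpf₂ (by omega) h,
      Tsum_eval hp hp2 hf₁ hf₂ hf₁0 hf₂0 hpf₁ hpf₂ hα h]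
  · rw [max_eq_right h.le] at hα ⊢
    rw [Cpf_eq_Tsum_right hp hp2 hf₁ hf₂ hf₁0 hf₂0 hpf₁ hpf₂ h,
      Tsum_eval hp hp2 hf₂ hf₁ hf₂0 hf₁0 hpf₂ hpf₁ hα h.le]

end
end
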